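/- arXiv:1507.00739 — 5 statements merged into one kernel-verified Lean document; each statement's English description precedes it below -/
import Mathlib

section
/- The four states |ψ₊₊⟩, Z|ψ₊₊⟩, X|ψ₊₊⟩, Y|ψ₊₊⟩ (with |ψ₊₊⟩ = (√(3+√3)|0⟩ + e^{iπ/4}√(3-√3)|1⟩)/√6) form a qubit 2-design: the average of |ψ⟩⟨ψ|⊗|ψ⟩⟨ψ| over these four states equals the average of |ψ⟩⟨ψ|⊗|ψ⟩⟨ψ| over Haar-random unit vectors in ℂ², namely (1/6)(I + SWAP) on ℂ²⊗ℂ², where SWAP is the swap operator. -/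
noncomputable section
open Complex Matrix

/-- Pauli X matrix. -/
def σX : Matrix (Fin 2) (Fin 2) ℂ := !![0, 1; 1, 0]
/-- Pauli Y matrix. -/
def σY : Matrix (Fin 2) (Fin 2) ℂ := !![0, -I; I, 0]
/-- Pauli Z matrix. -/
def σZ : Matrix (Fin 2) (Fin 2) ℂ := !![1, 0; 0, -1]

/-- The state |ψ₊₊⟩ = (√(3+√3)|0⟩ + e^{iπ/4}√(3-√3)|1⟩)/√6. -/
def ψpp : Fin 2 → ℂ :=
  ![(Real.sqrt (3 + Real.sqrt 3) : ℂ) / (Real.sqrt 6 : ℂ),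
    Complex.exp (Real.pi * I / 4) * (Real.sqrt (3 - Real.sqrt 3) : ℂ) / (Real.sqrt 6 : ℂ)]

/-- Expectation value ⟨ψ|M|ψ⟩. -/
def expVal (M : Matrix (Fin 2) (Fin 2) ℂ) (ψ : Fin 2 → ℂ) : ℂ :=
  ∑ i, ∑ j, (starRingEnd ℂ) (ψ i) * M i j * ψ j

open Kronecker

/-- The four tetrahedron states |ψ₊₊⟩, Z|ψ₊₊⟩, X|ψ₊₊⟩, Y|ψ₊₊⟩. -/
def tetraStates : Fin 4 → (Fin 2 → ℂ) :=
  ![ψpp, σZ.mulVec ψpp, σX.mulVec ψpp, σY.mulVec ψpp]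

/-- Rank-one projector |ψ⟩⟨ψ|. -/
def proj (ψ : Fin 2 → ℂ) : Matrix (Fin 2) (Fin 2) ℂ :=
  fun i j => ψ i * (starRingEnd ℂ) (ψ j)

/-- The swap operator on ℂ² ⊗ ℂ². -/
def SWAP : Matrix (Fin 2 × Fin 2) (Fin 2 × Fin 2) ℂ :=
  fun p q => if p.1 = q.2 ∧ p.2 = q.1 then 1 else 0


/-!
Writing a state as its Bloch matrix `(1 + x X + y Y + z Z) / 2`, the state `ψpp` has Bloch vector
`(1, 1, 1) / √3`, and conjugating by a Pauli matrix flips the signs of the other two coordinates.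
The four states therefore sit at the vertices of a regular tetrahedron inscribed in the Bloch
sphere, whose Bloch vectors `r` satisfy `∑ r = 0` and `∑ r rᵀ = (4 / 3) I`. Since
`SWAP = (1 ⊗ 1 + X ⊗ X + Y ⊗ Y + Z ⊗ Z) / 2`, these first and second moments are exactly those of the
Haar measure.
-/

def blochMatrix (x y z : ℂ) : Matrix (Fin 2) (Fin 2) ℂ :=
  (1 / 2 : ℂ) • (1 + x • σX + y • σY + z • σZ)

lemma blochMatrix_eq (x y z : ℂ) :
    blochMatrix x y z = !![(1 + z) / 2, (x - y * I) / 2; (x + y * I) / 2, (1 - z) / 2] := by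
  ext i j
  fin_cases i <;> fin_cases j <;> simp [blochMatrix, σX, σY, σZ] <;> ring

lemma proj_mulVec (M : Matrix (Fin 2) (Fin 2) ℂ) (ψ : Fin 2 → ℂ) :
    proj (M *ᵥ ψ) = M * proj ψ * Mᴴ := by
  ext i j
  simp only [proj, mulVec, dotProduct, Fin.sum_univ_two, map_add, map_mul, mul_apply,
    conjTranspose_apply, RCLike.star_def]
  ring

lemma σZ_conj_blochMatrix (x y z : ℂ) :
    σZ * blochMatrix x y z * σZᴴ = blochMatrix (-x) (-y) z := by
  rw [blochMatrix_eq, blochMatrix_eq]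
  ext i j
  fin_cases i <;> fin_cases j <;> simp [σZ, mul_apply, Fin.sum_univ_two] <;> ring

lemma σX_conj_blochMatrix (x y z : ℂ) :
    σX * blochMatrix x y z * σXᴴ = blochMatrix x (-y) (-z) := by
  rw [blochMatrix_eq, blochMatrix_eq]
  ext i j
  fin_cases i <;> fin_cases j <;> simp [σX, mul_apply, Fin.sum_univ_two] <;> ring

lemma σY_conj_blochMatrix (x y z : ℂ) :
    σY * blochMatrix x y z * σYᴴ = blochMatrix (-x) y (-z) := by
  rw [blochMatrix_eq, blochMatrix_eq]
  ext i j
  fin_cases i <;> fin_cases j <;> simp [σY, mul_apply, Fin.sum_univ_two] <;>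
    ring_nf <;> simp only [I_sq, I_pow_three] <;> ring

lemma tetrahedron_average_blochMatrix_kronecker_self (c : ℂ) (hc : c ^ 2 = 1 / 3) :
    (1 / 4 : ℂ) • (blochMatrix c c c ⊗ₖ blochMatrix c c c
      + blochMatrix (-c) (-c) c ⊗ₖ blochMatrix (-c) (-c) c
      + blochMatrix c (-c) (-c) ⊗ₖ blochMatrix c (-c) (-c)
      + blochMatrix (-c) c (-c) ⊗ₖ blochMatrix (-c) c (-c))
      = (1 / 6 : ℂ) • ((1 : Matrix (Fin 2 × Fin 2) (Fin 2 × Fin 2) ℂ) + SWAP) := by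
  simp only [blochMatrix_eq]
  ext ⟨i, k⟩ ⟨j, l⟩
  fin_cases i <;> fin_cases k <;> fin_cases j <;> fin_cases l <;>
    simp [SWAP, one_apply, kroneckerMap_apply] <;> ring_nf <;> simp only [hc, I_sq] <;> ring

lemma exp_pi_mul_I_div_four : exp (Real.pi * I / 4) = (√2 / 2 : ℝ) * (1 + I) := by
  have : (Real.pi * I / 4 : ℂ) = ((Real.pi / 4 : ℝ) : ℂ) * I := by push_cast; ring
  rw [this, exp_mul_I, ← ofReal_cos, ← ofReal_sin, Real.cos_pi_div_four, Real.sin_pi_div_four]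
  push_cast
  ring

lemma sqrt_three_add_sqrt_three_mul_sqrt_three_sub_sqrt_three : √(3 + √3) * √(3 - √3) = √6 := by
  rw [← Real.sqrt_mul (by positivity)]
  congr 1
  nlinarith [Real.sq_sqrt zero_le_three]

lemma sqrt_two_mul_sqrt_six : √2 * √6 = 2 * √3 := by
  rw [← Real.sqrt_mul zero_le_two, show (2 * 6 : ℝ) = 2 ^ 2 * 3 by norm_num,
    Real.sqrt_mul (by positivity), Real.sqrt_sq zero_le_two]

lemma sq_sqrt_three_add_sqrt_three_div_sqrt_six : (√(3 + √3) / √6) ^ 2 = (1 + √3 / 3) / 2 := by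
  rw [div_pow, Real.sq_sqrt (by positivity), Real.sq_sqrt (by norm_num)]
  ring

lemma sq_sqrt_three_sub_sqrt_three_div_sqrt_six : (√(3 - √3) / √6) ^ 2 = (1 - √3 / 3) / 2 := by
  have : √3 ≤ 3 := by nlinarith [Real.sq_sqrt zero_le_three, Real.sqrt_nonneg 3]
  rw [div_pow, Real.sq_sqrt (by linarith), Real.sq_sqrt (by norm_num)]
  ring

lemma sqrt_two_mul_sqrt_three_add_sqrt_three_div_sqrt_six_mul :
    √2 * (√(3 + √3) / √6) * (√(3 - √3) / √6) = √3 / 3 := by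
  rw [mul_assoc, div_mul_div_comm, sqrt_three_add_sqrt_three_mul_sqrt_three_sub_sqrt_three,
    ← mul_div_assoc, sqrt_two_mul_sqrt_six, Real.mul_self_sqrt (by norm_num)]
  ring

lemma proj_ψpp : proj ψpp = blochMatrix (√3 / 3 : ℝ) (√3 / 3 : ℝ) (√3 / 3 : ℝ) := by
  have h0 : ((√(3 + √3) / √6 : ℝ) : ℂ) ^ 2 = (1 + (√3 / 3 : ℝ)) / 2 := by
    exact_mod_cast sq_sqrt_three_add_sqrt_three_div_sqrt_six
  have h1 : ((√(3 - √3) / √6 : ℝ) : ℂ) ^ 2 = (1 - (√3 / 3 : ℝ)) / 2 := by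
    exact_mod_cast sq_sqrt_three_sub_sqrt_three_div_sqrt_six
  have h01 : (√2 : ℂ) * ((√(3 + √3) / √6 : ℝ) : ℂ) * ((√(3 - √3) / √6 : ℝ) : ℂ) = (√3 / 3 : ℝ) := by
    exact_mod_cast sqrt_two_mul_sqrt_three_add_sqrt_three_div_sqrt_six_mul
  have h2 : (√2 : ℂ) ^ 2 = 2 := by exact_mod_cast Real.sq_sqrt zero_le_two
  push_cast at h0 h1 h01
  rw [blochMatrix_eq]
  ext i j
  fin_cases i <;> fin_cases j <;>
    simp only [proj, ψpp, exp_pi_mul_I_div_four, of_apply, cons_val', cons_val_zero, cons_val_one,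
      cons_val_fin_one, Fin.zero_eta, Fin.mk_one, ofReal_div, ofReal_ofNat, map_div₀, map_mul, map_add,
      map_one, map_ofNat, conj_ofReal, conj_I]
  · linear_combination h0
  · linear_combination (1 - I) / 2 * h01
  · linear_combination (1 + I) / 2 * h01
  -- `|exp (π i / 4)| ^ 2 = (√2) ^ 2 (1 - I ^ 2) / 4 = 1`
  · linear_combination h1 + (↑√(3 - √3) / ↑√6) ^ 2 * ((1 - I ^ 2) / 4 * h2 - I_sq / 2)

theorem stmt_4 :
    (1 / 4 : ℂ) • (∑ i : Fin 4, (proj (tetraStates i)) ⊗ₖ (proj (tetraStates i)))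
      = (1 / 6 : ℂ) • ((1 : Matrix (Fin 2 × Fin 2) (Fin 2 × Fin 2) ℂ) + SWAP) := by
  have hc : ((√3 / 3 : ℝ) : ℂ) ^ 2 = 1 / 3 := by
    push_cast
    rw [div_pow, ← ofReal_pow, Real.sq_sqrt zero_le_three]
    norm_num
  rw [Fin.sum_univ_four]
  simp only [tetraStates, cons_val_zero, cons_val_one, cons_val_two, cons_val_three, head_cons,
    tail_cons, proj_mulVec, proj_ψpp, σZ_conj_blochMatrix, σX_conj_blochMatrix, σY_conj_blochMatrix]
  exact tetrahedron_average_blochMatrix_kronecker_self _ hc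
end
end

section
/- The mutual overlaps of the tetrahedron states are uniform: for any two distinct states among |ψ₊₊⟩, Z|ψ₊₊⟩, X|ψ₊₊⟩, Y|ψ₊₊⟩ (with |ψ₊₊⟩ = (√(3+√3)|0⟩ + e^{iπ/4}√(3-√3)|1⟩)/√6), the squared absolute value of their inner product equals 1/3. -/
noncomputable section
open Complex Matrix

lemma hexp' : Complex.exp (Real.pi * I / 4) = (Real.sqrt 2 / 2 : ℝ) * (1 + I) := by
  have : (Real.pi : ℂ) * I / 4 = (Real.pi/4 : ℝ) * I := by push_cast; ring
  rw [this, Complex.exp_mul_I, ← Complex.ofReal_cos, ← Complex.ofReal_sin,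
    Real.cos_pi_div_four, Real.sin_pi_div_four]
  push_cast; ring

lemma hp' : Real.sqrt (3 + Real.sqrt 3) ^ 2 = 3 + Real.sqrt 3 := Real.sq_sqrt (by positivity)
lemma ht3' : Real.sqrt 3 ≤ 3 := by
  nlinarith [Real.sq_sqrt (show (0:ℝ) ≤ 3 by norm_num), Real.sqrt_nonneg 3]
lemma hq' : Real.sqrt (3 - Real.sqrt 3) ^ 2 = 3 - Real.sqrt 3 :=
  Real.sq_sqrt (by linarith [ht3'])
lemma ht' : Real.sqrt 3 ^ 2 = 3 := Real.sq_sqrt (by norm_num)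
lemma hs' : Real.sqrt 2 ^ 2 = 2 := Real.sq_sqrt (by norm_num)
lemma hu' : Real.sqrt 6 ^ 2 = 6 := Real.sq_sqrt (by norm_num)
lemma hpq' : Real.sqrt (3 + Real.sqrt 3) * Real.sqrt (3 - Real.sqrt 3) = Real.sqrt 6 := by
  rw [← Real.sqrt_mul (by positivity)]
  congr 1; nlinarith [ht']
lemma hsu' : Real.sqrt 2 * Real.sqrt 6 = 2 * Real.sqrt 3 := by
  rw [← Real.sqrt_mul (by norm_num), show (2:ℝ)*6 = 12 by norm_num,
    show (12:ℝ) = 2^2*3 by norm_num, Real.sqrt_mul (by positivity),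
    Real.sqrt_sq (by norm_num)]
lemma hA' : (Real.sqrt 2*Real.sqrt (3-Real.sqrt 3)*Real.sqrt 6)^2 = 12*(3-Real.sqrt 3) := by
  rw [mul_pow, mul_pow, hs', hq', hu']; ring
lemma hB' : (Real.sqrt (3+Real.sqrt 3)*Real.sqrt 6)^2 = 6*(3+Real.sqrt 3) := by
  rw [mul_pow, hp', hu']; ring
lemma hC' : (Real.sqrt 2*Real.sqrt (3+Real.sqrt 3)*Real.sqrt 6)^2 = 12*(3+Real.sqrt 3) := by
  rw [mul_pow, mul_pow, hs', hp', hu']; ring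
lemma hD' : (Real.sqrt (3-Real.sqrt 3)*Real.sqrt 6)^2 = 6*(3-Real.sqrt 3) := by
  rw [mul_pow, hq', hu']; ring
lemma hE' : (Real.sqrt 2*Real.sqrt (3+Real.sqrt 3)*Real.sqrt 6)*(Real.sqrt 2*Real.sqrt (3-Real.sqrt 3)*Real.sqrt 6) = 12*Real.sqrt 6 := by
  rw [show Real.sqrt 2*Real.sqrt (3+Real.sqrt 3)*Real.sqrt 6*(Real.sqrt 2*Real.sqrt (3-Real.sqrt 3)*Real.sqrt 6) = (Real.sqrt 2^2)*(Real.sqrt 6^2)*(Real.sqrt (3+Real.sqrt 3)*Real.sqrt (3-Real.sqrt 3)) by ring, hs', hu', hpq']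
  ring
lemma hF' : (Real.sqrt (3+Real.sqrt 3)*Real.sqrt 6)*(Real.sqrt 2*Real.sqrt (3-Real.sqrt 3)*Real.sqrt 6) = 12*Real.sqrt 3 := by
  rw [show Real.sqrt (3+Real.sqrt 3)*Real.sqrt 6*(Real.sqrt 2*Real.sqrt (3-Real.sqrt 3)*Real.sqrt 6) = (Real.sqrt 2*Real.sqrt 6)*(Real.sqrt (3+Real.sqrt 3)*Real.sqrt (3-Real.sqrt 3))*Real.sqrt 6 by ring, hsu', hpq']
  rw [show 2*Real.sqrt 3*Real.sqrt 6*Real.sqrt 6 = 2*Real.sqrt 3*(Real.sqrt 6^2) by ring, hu']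
  ring
lemma hG' : (Real.sqrt 2*Real.sqrt (3+Real.sqrt 3)*Real.sqrt 6)*(Real.sqrt (3-Real.sqrt 3)*Real.sqrt 6) = 12*Real.sqrt 3 := by
  rw [show Real.sqrt 2*Real.sqrt (3+Real.sqrt 3)*Real.sqrt 6*(Real.sqrt (3-Real.sqrt 3)*Real.sqrt 6) = (Real.sqrt 2*Real.sqrt 6)*(Real.sqrt (3+Real.sqrt 3)*Real.sqrt (3-Real.sqrt 3))*Real.sqrt 6 by ring, hsu', hpq']
  rw [show 2*Real.sqrt 3*Real.sqrt 6*Real.sqrt 6 = 2*Real.sqrt 3*(Real.sqrt 6^2) by ring, hu']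
  ring
lemma hH' : (Real.sqrt (3+Real.sqrt 3)*Real.sqrt 6)*(Real.sqrt (3-Real.sqrt 3)*Real.sqrt 6) = 6*Real.sqrt 6 := by
  rw [show Real.sqrt (3+Real.sqrt 3)*Real.sqrt 6*(Real.sqrt (3-Real.sqrt 3)*Real.sqrt 6) = (Real.sqrt (3+Real.sqrt 3)*Real.sqrt (3-Real.sqrt 3))*Real.sqrt 6^2 by ring, hpq', hu']
  ring

set_option maxHeartbeats 4000000 in
theorem stmt_5 (i j : Fin 4) (hij : i ≠ j) :
    ‖∑ k, (starRingEnd ℂ) (tetraStates i k) * tetraStates j k‖ ^ 2 = 1 / 3 := by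
  fin_cases i <;> fin_cases j <;>
    first
    | exact absurd rfl hij
    | (rw [Complex.sq_norm]
       simp only [tetraStates, ψpp, σX, σY, σZ, Matrix.cons_mulVec, Matrix.cons_val',
         Matrix.cons_val_zero, Matrix.cons_val_one, Matrix.head_cons, Matrix.empty_mulVec,
         Matrix.cons_dotProduct, Matrix.dotProduct_of_isEmpty, Fin.sum_univ_two,
         Matrix.cons_val_fin_one, hexp', Matrix.head_fin_const, Matrix.cons_val_two,
         Matrix.cons_val_three, Matrix.tail_cons, Fin.reduceFinMk]
       simp only [Complex.normSq_apply, _root_.map_mul, map_div₀, Complex.add_re, Complex.add_im,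
         Complex.mul_re, Complex.mul_im, Complex.div_re, Complex.div_im, Complex.ofReal_re,
         Complex.ofReal_im, Complex.I_re, Complex.I_im, Complex.one_re, Complex.one_im,
         Complex.conj_re, Complex.conj_im, Complex.normSq_ofReal, Complex.neg_re, Complex.neg_im,
         Complex.zero_re, Complex.zero_im, map_zero, _root_.map_one, Complex.conj_I,
         Complex.normSq_mk, Complex.inv_re, Complex.inv_im, Complex.sub_re, Complex.sub_im]
       have h6 : Real.sqrt 6 ≠ 0 := by positivity
       simp only [mul_zero, zero_mul, add_zero, zero_add, sub_zero, zero_sub, neg_zero, mul_one,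
         one_mul, neg_neg, ne_eq, OfNat.ofNat_ne_zero, not_false_eq_true, zero_pow, mul_neg, neg_mul]
       field_simp
       ring_nf
       simp only [show ∀ x : ℝ, x ^ 4 = (x ^ 2) ^ 2 from fun x => by ring,
         show ∀ x : ℝ, x ^ 8 = ((x ^ 2) ^ 2) ^ 2 from fun x => by ring, hp', hq', hs', hu']
       nlinarith [hA', hB', hC', hD', hE', hF', hG', hH', ht', hs', hu', hpq', hsu', hp', hq',
         Real.sqrt_nonneg 3])
end
end

section
/- Let f : {±1}ⁿ → ℝ be a polynomial of degree at most k (i.e. f̂(S) = 0 whenever |S| > k), and suppose each variable i ∈ [n] appears in at most ℓ monomials with nonzero coefficient. Define W(f) = Σ_{S≠∅} |f̂(S)|. Then max_{x∈{±1}ⁿ} f(x) ≥ f̂(∅) + W(f)/(2kℓ). -/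
open scoped Classical

/-- The multilinear polynomial with Fourier coefficients `fhat`. -/
def fourierFn {n : ℕ} (fhat : Finset (Fin n) → ℝ) (x : Fin n → ℝ) : ℝ :=
  ∑ S : Finset (Fin n), fhat S * ∏ i ∈ S, x i

open Finset

variable {n : ℕ}


lemma helper1 (A C : Finset (Fin n)) :
    (∏ i ∈ A, (if i ∈ C then (-1:ℝ) else 1)) = (-1:ℝ)^((A ∩ C).card) := by
  rw [Finset.prod_ite, Finset.prod_const, Finset.prod_const, one_pow, mul_one,
    Finset.filter_mem_eq_inter]

lemma L0 (B C : Finset (Fin n)) (hCB : C ⊆ B) :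
    ∑ A ∈ B.powerset, (-1:ℝ)^((A ∩ C).card) = if C = ∅ then 2^B.card else 0 := by
  have key := Finset.prod_add (fun i => if i ∈ C then (-1:ℝ) else 1) (fun _ => (1:ℝ)) B
  simp only [Finset.prod_const, one_pow, mul_one] at key
  have hR : ∑ t ∈ B.powerset, ∏ i ∈ t, (if i ∈ C then (-1:ℝ) else 1)
      = ∑ A ∈ B.powerset, (-1:ℝ)^((A ∩ C).card) :=
    Finset.sum_congr rfl (fun A _ => helper1 A C)
  rw [hR] at key
  rw [← key]
  by_cases hC : C = ∅
  · subst hC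
    simp
    norm_num
  · rw [if_neg hC]
    obtain ⟨i, hi⟩ := Finset.nonempty_iff_ne_empty.2 hC
    exact Finset.prod_eq_zero (hCB hi) (by simp [hi])

lemma negpow (c d : ℕ) : (-1:ℝ)^(c+d) * (-1)^c = (-1)^d := by
  have h1 : (-1:ℝ)^c * (-1)^c = 1 := by
    rw [← pow_add, ← two_mul, pow_mul]; norm_num
  calc (-1:ℝ)^(c+d) * (-1)^c = ((-1)^c * (-1)^c) * (-1)^d := by rw [pow_add]; ring
  _ = (-1)^d := by rw [h1, one_mul]

noncomputable def epsA (i₀ : Fin n) (sgn : ℝ) (A : Finset (Fin n)) : Fin n → ℝ :=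
  fun i => if i = i₀ then sgn * (-1)^A.card else if i ∈ A then -1 else 1

lemma K1 (Sstar : Finset (Fin n)) (i₀ : Fin n) (hi₀ : i₀ ∈ Sstar) (sgn : ℝ)
    (T : Finset (Fin n)) (hT : T ⊆ Sstar) :
    ∑ A ∈ (Sstar.erase i₀).powerset, ∏ i ∈ T, epsA i₀ sgn A i
    = (if T = ∅ then 1 else if T = Sstar then sgn else 0)
        * 2^(Sstar.erase i₀).card := by
  set S' := Sstar.erase i₀ with hS'
  by_cases hiT : i₀ ∈ T
  · have hTne : T ≠ ∅ := fun h => by simp [h] at hiT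
    have hT' : T.erase i₀ ⊆ S' := Finset.erase_subset_erase _ hT
    have hstep : ∀ A ∈ S'.powerset,
        (∏ i ∈ T, epsA i₀ sgn A i) = sgn * (-1:ℝ)^((A ∩ (S' \ T.erase i₀)).card) := by
      intro A hA
      rw [Finset.mem_powerset] at hA
      rw [← Finset.mul_prod_erase T _ hiT]
      have h1 : epsA i₀ sgn A i₀ = sgn * (-1)^A.card := by simp [epsA]
      have h2 : (∏ i ∈ T.erase i₀, epsA i₀ sgn A i)
          = ∏ i ∈ T.erase i₀, (if i ∈ A then (-1:ℝ) else 1) := by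
        refine Finset.prod_congr rfl (fun i hi => ?_)
        have hne : i ≠ i₀ := (Finset.mem_erase.1 hi).1
        simp [epsA, hne]
      rw [h1, h2, helper1]
      have hdisj : Disjoint (A ∩ T.erase i₀) (A ∩ (S' \ T.erase i₀)) :=
        Finset.disjoint_left.2 (fun x hx hx' => by
          have h3 := (Finset.mem_inter.1 hx).2
          have h4 := (Finset.mem_sdiff.1 (Finset.mem_inter.1 hx').2).2
          exact h4 h3)
      have hcard : A.card = (A ∩ T.erase i₀).card + (A ∩ (S' \ T.erase i₀)).card := by
        rw [← Finset.card_union_of_disjoint hdisj, ← Finset.inter_union_distrib_left,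
          Finset.union_sdiff_of_subset hT', Finset.inter_eq_left.2 hA]
      rw [Finset.inter_comm (T.erase i₀) A, hcard, mul_assoc, negpow]
    rw [Finset.sum_congr rfl hstep, ← Finset.mul_sum,
      L0 S' (S' \ T.erase i₀) Finset.sdiff_subset]
    by_cases hTS : T = Sstar
    · subst hTS
      simp [hTne, hS']
    · have hne : S' \ T.erase i₀ ≠ ∅ := by
        intro h
        apply hTS
        have hsub : S' ⊆ T.erase i₀ := by
          intro x hx
          by_contra hx'
          exact (Finset.notMem_empty x) (h ▸ Finset.mem_sdiff.2 ⟨hx, hx'⟩)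
        apply Finset.Subset.antisymm hT
        intro x hx
        by_cases hxi : x = i₀
        · exact hxi ▸ hiT
        · exact Finset.mem_of_mem_erase (hsub (Finset.mem_erase.2 ⟨hxi, hx⟩))
      simp [hTne, hTS, hne]
  · have hTS' : T ⊆ S' := Finset.subset_erase.2 ⟨hT, hiT⟩
    have hTSne : T ≠ Sstar := fun h => hiT (h ▸ hi₀)
    have hstep : ∀ A ∈ S'.powerset,
        (∏ i ∈ T, epsA i₀ sgn A i) = (-1:ℝ)^((A ∩ T).card) := by
      intro A hA
      have h2 : (∏ i ∈ T, epsA i₀ sgn A i)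
          = ∏ i ∈ T, (if i ∈ A then (-1:ℝ) else 1) := by
        refine Finset.prod_congr rfl (fun i hi => ?_)
        have hne : i ≠ i₀ := fun h => hiT (h ▸ hi)
        simp [epsA, hne]
      rw [h2, helper1, Finset.inter_comm]
    rw [Finset.sum_congr rfl hstep, L0 S' T hTS']
    by_cases hT0 : T = ∅
    · simp [hT0]
    · simp [hT0, hTSne]

noncomputable def ghat (fhat : Finset (Fin n) → ℝ) (Sstar : Finset (Fin n))
    (ε : Fin n → ℝ) : Finset (Fin n) → ℝ :=
  fun U => if U ∩ Sstar = ∅ then ∑ T ∈ Sstar.powerset, fhat (U ∪ T) * ∏ i ∈ T, ε i else 0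

lemma restrict_eq (fhat : Finset (Fin n) → ℝ) (Sstar : Finset (Fin n)) (ε x : Fin n → ℝ)
    (hx : ∀ i ∈ Sstar, x i = ε i) :
    fourierFn fhat x = fourierFn (ghat fhat Sstar ε) x := by
  unfold fourierFn ghat
  have step1 : ∑ U : Finset (Fin n),
        (if U ∩ Sstar = ∅ then ∑ T ∈ Sstar.powerset, fhat (U ∪ T) * ∏ i ∈ T, ε i else 0)
          * ∏ i ∈ U, x i
      = ∑ U ∈ Finset.univ.filter (fun U : Finset (Fin n) => U ∩ Sstar = ∅),
          ∑ T ∈ Sstar.powerset, (fhat (U ∪ T) * ∏ i ∈ T, ε i) * ∏ i ∈ U, x i := by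
    rw [Finset.sum_filter]
    refine Finset.sum_congr rfl (fun U _ => ?_)
    split_ifs with h
    · rw [Finset.sum_mul]
    · rw [zero_mul]
  rw [step1, ← Finset.sum_product']
  refine Finset.sum_nbij' (fun S => (S \ Sstar, S ∩ Sstar)) (fun p => p.1 ∪ p.2)
    ?_ ?_ ?_ ?_ ?_
  · intro S _
    rw [Finset.mem_product]
    constructor
    · rw [Finset.mem_filter]
      exact ⟨Finset.mem_univ _, by simp⟩
    · exact Finset.mem_powerset.2 Finset.inter_subset_right
  · intro p _
    exact Finset.mem_univ _
  · intro S _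
    exact Finset.sdiff_union_inter S Sstar
  · intro p hp
    rw [Finset.mem_product, Finset.mem_filter, Finset.mem_powerset] at hp
    obtain ⟨⟨-, h1⟩, h2⟩ := hp
    have e1 : (p.1 ∪ p.2) \ Sstar = p.1 := by
      rw [Finset.union_sdiff_distrib, Finset.sdiff_eq_empty_iff_subset.2 h2,
        Finset.union_empty, (Finset.sdiff_eq_self_iff_disjoint).2
          (Finset.disjoint_iff_inter_eq_empty.2 h1)]
    have e2 : (p.1 ∪ p.2) ∩ Sstar = p.2 := by
      rw [Finset.union_inter_distrib_right, h1, Finset.empty_union,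
        Finset.inter_eq_left.2 h2]
    exact Prod.ext e1 e2
  · intro S _
    have hdisj : Disjoint (S \ Sstar) (S ∩ Sstar) := by
      refine Finset.disjoint_left.2 (fun a ha ha' => ?_)
      exact (Finset.mem_sdiff.1 ha).2 (Finset.mem_inter.1 ha').2
    have e0 : S = (S \ Sstar) ∪ (S ∩ Sstar) := (Finset.sdiff_union_inter S Sstar).symm
    calc fhat S * ∏ i ∈ S, x i
        = fhat ((S \ Sstar) ∪ (S ∩ Sstar)) * ∏ i ∈ (S \ Sstar) ∪ (S ∩ Sstar), x i := by
          rw [← e0]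
      _ = fhat ((S \ Sstar) ∪ (S ∩ Sstar))
            * ((∏ i ∈ S \ Sstar, x i) * ∏ i ∈ S ∩ Sstar, x i) := by
          rw [Finset.prod_union hdisj]
      _ = (fhat ((S \ Sstar) ∪ (S ∩ Sstar)) * ∏ i ∈ S ∩ Sstar, ε i)
            * ∏ i ∈ S \ Sstar, x i := by
          rw [Finset.prod_congr rfl (fun i hi => hx i (Finset.mem_inter.1 hi).2)]
          ring

lemma ghat_eval (fhat : Finset (Fin n) → ℝ) (Sstar : Finset (Fin n)) (ε x x' : Fin n → ℝ)
    (h : ∀ i, i ∉ Sstar → x i = x' i) :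
    fourierFn (ghat fhat Sstar ε) x = fourierFn (ghat fhat Sstar ε) x' := by
  unfold fourierFn
  refine Finset.sum_congr rfl (fun U _ => ?_)
  by_cases hU : U ∩ Sstar = ∅
  · congr 1
    refine Finset.prod_congr rfl (fun i hi => h i (fun hi' => ?_))
    exact Finset.notMem_empty i (hU ▸ Finset.mem_inter.2 ⟨hi, hi'⟩)
  · simp [ghat, hU]

lemma ghat_ne_zero {fhat : Finset (Fin n) → ℝ} {Sstar : Finset (Fin n)} {ε : Fin n → ℝ}
    {U : Finset (Fin n)} (h : ghat fhat Sstar ε U ≠ 0) :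
    U ∩ Sstar = ∅ ∧ ∃ T, T ⊆ Sstar ∧ fhat (U ∪ T) ≠ 0 := by
  unfold ghat at h
  by_cases hU : U ∩ Sstar = ∅
  · rw [if_pos hU] at h
    obtain ⟨T, hT, hT2⟩ := Finset.exists_ne_zero_of_sum_ne_zero h
    exact ⟨hU, T, Finset.mem_powerset.1 hT, fun h0 => hT2 (by rw [h0, zero_mul])⟩
  · rw [if_neg hU] at h
    exact absurd rfl h

lemma empty_case (k ℓ : ℕ) (fhat : Finset (Fin n) → ℝ) (h : ∀ S : Finset (Fin n), S ≠ ∅ → fhat S = 0) :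
    ∃ x : Fin n → ℝ, (∀ i, x i = 1 ∨ x i = -1) ∧
      fhat ∅ + (∑ S ∈ Finset.univ.filter (fun S : Finset (Fin n) => S ≠ ∅), |fhat S|)
        / (2 * k * ℓ) ≤ fourierFn fhat x := by
  refine ⟨fun _ => 1, fun i => Or.inl rfl, ?_⟩
  have hW : (∑ S ∈ Finset.univ.filter (fun S : Finset (Fin n) => S ≠ ∅), |fhat S|) = 0 :=
    Finset.sum_eq_zero (fun S hS => by rw [h S (Finset.mem_filter.1 hS).2, abs_zero])
  have hf : fourierFn fhat (fun _ => 1) = fhat ∅ := by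
    unfold fourierFn
    rw [Finset.sum_eq_single (∅ : Finset (Fin n))]
    · simp
    · intro S _ hS
      rw [h S hS, zero_mul]
    · intro h'
      exact absurd (Finset.mem_univ _) h'
  rw [hW, hf, zero_div, add_zero]

lemma main_ind (k ℓ : ℕ) : ∀ (m : ℕ) (fhat : Finset (Fin n) → ℝ),
    (Finset.univ.filter (fun S : Finset (Fin n) => S ≠ ∅ ∧ fhat S ≠ 0)).card ≤ m →
    (∀ S : Finset (Fin n), fhat S ≠ 0 → S.card ≤ k) →
    (∀ i : Fin n, (Finset.univ.filter (fun S : Finset (Fin n) => fhat S ≠ 0 ∧ i ∈ S)).card ≤ ℓ) →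
    ∃ x : Fin n → ℝ, (∀ i, x i = 1 ∨ x i = -1) ∧
      fhat ∅ + (∑ S ∈ Finset.univ.filter (fun S : Finset (Fin n) => S ≠ ∅), |fhat S|)
        / (2 * k * ℓ) ≤ fourierFn fhat x := by
  intro m
  induction m with
  | zero =>
    intro fhat hcard hdeg hl
    refine empty_case k ℓ fhat (fun S hS => ?_)
    by_contra h0
    have h1 : S ∈ Finset.univ.filter (fun S : Finset (Fin n) => S ≠ ∅ ∧ fhat S ≠ 0) :=
      Finset.mem_filter.2 ⟨Finset.mem_univ _, hS, h0⟩
    have := Finset.card_pos.2 ⟨S, h1⟩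
    omega
  | succ m ih =>
    intro fhat hcard hdeg hl
    by_cases hsup : (Finset.univ.filter (fun S : Finset (Fin n) => S ≠ ∅ ∧ fhat S ≠ 0)) = ∅
    · refine empty_case k ℓ fhat (fun S hS => ?_)
      by_contra h0
      exact Finset.notMem_empty S
        (hsup ▸ Finset.mem_filter.2 ⟨Finset.mem_univ _, hS, h0⟩)
    obtain ⟨Sstar, hSmem, hmax⟩ := Finset.exists_max_image _ (fun S => |fhat S|)
      (Finset.nonempty_iff_ne_empty.2 hsup)
    obtain ⟨hSne, hSnz⟩ := (Finset.mem_filter.1 hSmem).2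
    obtain ⟨i₀, hi₀⟩ := Finset.nonempty_iff_ne_empty.2 hSne
    set S' := Sstar.erase i₀ with hS'def
    set sgn : ℝ := if 0 < fhat Sstar then 1 else -1 with hsgndef
    have hsgn_pm : sgn = 1 ∨ sgn = -1 := by
      rw [hsgndef]
      split_ifs
      exacts [Or.inl rfl, Or.inr rfl]
    have habs_sgn : |sgn| = 1 := by rcases hsgn_pm with h | h <;> rw [h] <;> norm_num
    have hsgn_mul : sgn * fhat Sstar = |fhat Sstar| := by
      rw [hsgndef]
      split_ifs with h
      · rw [one_mul, abs_of_pos h]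
      · rw [neg_one_mul, abs_of_nonpos (le_of_not_gt h)]
    have hk1 : 1 ≤ k := le_trans (Finset.card_pos.2 ⟨i₀, hi₀⟩) (hdeg Sstar hSnz)
    have hl1 : 1 ≤ ℓ := le_trans (Finset.card_pos.2
      ⟨Sstar, Finset.mem_filter.2 ⟨Finset.mem_univ _, hSnz, hi₀⟩⟩) (hl i₀)
    have hc : (0:ℝ) < 2 * k * ℓ := by
      have h1 : (0:ℝ) < k := by exact_mod_cast hk1
      have h2 : (0:ℝ) < ℓ := by exact_mod_cast hl1
      nlinarith
    have h2d : (0:ℝ) < 2 ^ S'.card := by positivity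
    have hrecT : ∀ (U T : Finset (Fin n)), U ∩ Sstar = ∅ → T ⊆ Sstar →
        (U ∪ T) \ Sstar = U := by
      intro U T hU hT
      rw [Finset.union_sdiff_distrib, Finset.sdiff_eq_empty_iff_subset.2 hT,
        Finset.union_empty, Finset.sdiff_eq_self_iff_disjoint.2
          (Finset.disjoint_iff_inter_eq_empty.2 hU)]
    have K2 : ∀ U : Finset (Fin n), U ∩ Sstar = ∅ →
        ∑ A ∈ S'.powerset, ghat fhat Sstar (epsA i₀ sgn A) U
        = (fhat U + sgn * fhat (U ∪ Sstar)) * 2 ^ S'.card := by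
      intro U hU
      have e1 : ∀ A ∈ S'.powerset, ghat fhat Sstar (epsA i₀ sgn A) U
          = ∑ T ∈ Sstar.powerset, fhat (U ∪ T) * ∏ i ∈ T, epsA i₀ sgn A i :=
        fun A _ => if_pos hU
      rw [Finset.sum_congr rfl e1, Finset.sum_comm]
      have e2 : ∀ T ∈ Sstar.powerset,
          ∑ A ∈ S'.powerset, fhat (U ∪ T) * ∏ i ∈ T, epsA i₀ sgn A i
          = fhat (U ∪ T) * ((if T = ∅ then 1 else if T = Sstar then sgn else 0)
              * 2 ^ S'.card) := by
        intro T hT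
        rw [← Finset.mul_sum, K1 Sstar i₀ hi₀ sgn T (Finset.mem_powerset.1 hT)]
      rw [Finset.sum_congr rfl e2]
      have hsub : ({∅, Sstar} : Finset (Finset (Fin n))) ⊆ Sstar.powerset := by
        intro T hT
        rcases Finset.mem_insert.1 hT with h | h
        · rw [h]; exact Finset.empty_mem_powerset _
        · rw [Finset.mem_singleton.1 h]; exact Finset.mem_powerset_self _
      have hvan : ∀ T ∈ Sstar.powerset, T ∉ ({∅, Sstar} : Finset (Finset (Fin n))) →
          fhat (U ∪ T) * ((if T = ∅ then 1 else if T = Sstar then sgn else 0)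
            * 2 ^ S'.card) = 0 := by
        intro T _ hT
        have h1 : T ≠ ∅ := fun h => hT (by rw [h]; exact Finset.mem_insert_self _ _)
        have h2 : T ≠ Sstar := fun h =>
          hT (by rw [h]; exact Finset.mem_insert.2 (Or.inr (Finset.mem_singleton_self _)))
        rw [if_neg h1, if_neg h2, zero_mul, mul_zero]
      rw [← Finset.sum_subset hsub hvan, Finset.sum_pair (Ne.symm hSne)]
      rw [if_pos rfl, if_neg hSne, if_pos rfl, Finset.union_empty]
      ring
    set D := Finset.univ.filter (fun U : Finset (Fin n) => U ≠ ∅ ∧ U ∩ Sstar = ∅) with hDdef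
    set R := ∑ S ∈ Finset.univ.filter (fun S : Finset (Fin n) => S ∩ Sstar ≠ ∅), |fhat S|
      with hRdef
    set W := ∑ S ∈ Finset.univ.filter (fun S : Finset (Fin n) => S ≠ ∅), |fhat S| with hWdef
    have f1 : W = (∑ U ∈ D, |fhat U|) + R := by
      have hsplit := Finset.sum_filter_add_sum_filter_not
        (Finset.univ.filter (fun S : Finset (Fin n) => S ≠ ∅))
        (fun S => S ∩ Sstar = ∅) (fun S => |fhat S|)
      rw [Finset.filter_filter, Finset.filter_filter] at hsplit
      have e3 : Finset.univ.filter (fun S : Finset (Fin n) => S ≠ ∅ ∧ ¬ S ∩ Sstar = ∅)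
          = Finset.univ.filter (fun S : Finset (Fin n) => S ∩ Sstar ≠ ∅) := by
        refine Finset.filter_congr (fun S _ => ?_)
        constructor
        · exact fun h => h.2
        · intro h
          refine ⟨?_, h⟩
          intro h0
          exact h (by rw [h0]; exact Finset.empty_inter _)
      rw [e3] at hsplit
      exact hsplit.symm
    have f2 : R ≤ ((k * ℓ : ℕ) : ℝ) * |fhat Sstar| := by
      set F := Finset.univ.filter (fun S : Finset (Fin n) => fhat S ≠ 0 ∧ S ∩ Sstar ≠ ∅)
        with hFdef
      have e1 : R = ∑ S ∈ F, |fhat S| := by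
        rw [hRdef]
        refine (Finset.sum_subset ?_ ?_).symm
        · intro S hS
          exact Finset.mem_filter.2 ⟨Finset.mem_univ _, (Finset.mem_filter.1 hS).2.2⟩
        · intro S hS hS'
          by_contra h0
          have hnz : fhat S ≠ 0 := fun hz => h0 (by rw [hz, abs_zero])
          exact hS' (Finset.mem_filter.2 ⟨Finset.mem_univ _, hnz, (Finset.mem_filter.1 hS).2⟩)
      have e2 : ∑ S ∈ F, |fhat S| ≤ F.card • |fhat Sstar| := by
        refine Finset.sum_le_card_nsmul _ _ _ (fun S hS => ?_)
        obtain ⟨-, hnz, hint⟩ := Finset.mem_filter.1 hS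
        refine hmax S (Finset.mem_filter.2 ⟨Finset.mem_univ _, ?_, hnz⟩)
        obtain ⟨a, ha⟩ := Finset.nonempty_iff_ne_empty.2 hint
        exact Finset.nonempty_iff_ne_empty.1 ⟨a, (Finset.mem_inter.1 ha).1⟩
      have e3 : F.card ≤ k * ℓ := by
        have hsub : F ⊆ Sstar.biUnion (fun i =>
            Finset.univ.filter (fun S : Finset (Fin n) => fhat S ≠ 0 ∧ i ∈ S)) := by
          intro S hS
          obtain ⟨-, hnz, hint⟩ := Finset.mem_filter.1 hS
          obtain ⟨a, ha⟩ := Finset.nonempty_iff_ne_empty.2 hint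
          obtain ⟨haS, haSt⟩ := Finset.mem_inter.1 ha
          exact Finset.mem_biUnion.2
            ⟨a, haSt, Finset.mem_filter.2 ⟨Finset.mem_univ _, hnz, haS⟩⟩
        calc F.card ≤ _ := Finset.card_le_card hsub
          _ ≤ ∑ i ∈ Sstar, (Finset.univ.filter
              (fun S : Finset (Fin n) => fhat S ≠ 0 ∧ i ∈ S)).card := Finset.card_biUnion_le
          _ ≤ ∑ _i ∈ Sstar, ℓ := Finset.sum_le_sum (fun i _ => hl i)
          _ = Sstar.card * ℓ := by rw [Finset.sum_const, smul_eq_mul]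
          _ ≤ k * ℓ := Nat.mul_le_mul_right _ (hdeg Sstar hSnz)
      rw [e1]
      calc ∑ S ∈ F, |fhat S| ≤ F.card • |fhat Sstar| := e2
        _ = (F.card : ℝ) * |fhat Sstar| := nsmul_eq_mul _ _
        _ ≤ ((k * ℓ : ℕ) : ℝ) * |fhat Sstar| :=
            mul_le_mul_of_nonneg_right (by exact_mod_cast e3) (abs_nonneg _)
    have f3 : ∑ U ∈ D, |fhat (U ∪ Sstar)| ≤ R := by
      have hinj : ∀ U ∈ D, ∀ V ∈ D, U ∪ Sstar = V ∪ Sstar → U = V := by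
        intro U hU V hV h
        have hU2 := (Finset.mem_filter.1 hU).2.2
        have hV2 := (Finset.mem_filter.1 hV).2.2
        rw [← hrecT U Sstar hU2 (Finset.Subset.refl _),
          ← hrecT V Sstar hV2 (Finset.Subset.refl _), h]
      rw [show (∑ U ∈ D, |fhat (U ∪ Sstar)|)
        = ∑ S ∈ D.image (fun U => U ∪ Sstar), |fhat S| from (Finset.sum_image (f := fun S => |fhat S|) hinj).symm]
      refine Finset.sum_le_sum_of_subset_of_nonneg ?_ (fun _ _ _ => abs_nonneg _)
      intro S hS
      obtain ⟨U, hU, rfl⟩ := Finset.mem_image.1 hS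
      refine Finset.mem_filter.2 ⟨Finset.mem_univ _, ?_⟩
      have : Sstar ⊆ U ∪ Sstar := Finset.subset_union_right
      intro h0
      have hi0' : i₀ ∈ (U ∪ Sstar) ∩ Sstar :=
        Finset.mem_inter.2 ⟨this hi₀, hi₀⟩
      exact Finset.notMem_empty i₀ (h0 ▸ hi0')
    have habs_sub : ∀ a b : ℝ, |a| - |b| ≤ |a + sgn * b| := by
      intro a b
      have h1 : |sgn * b| = |b| := by rw [abs_mul, habs_sgn, one_mul]
      have h2 := abs_add_le (a + sgn * b) (-(sgn * b))
      have h3 : a + sgn * b + -(sgn * b) = a := by ring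
      rw [h3, abs_neg, h1] at h2
      linarith
    have hWg : (W - 2 * R) * 2 ^ S'.card ≤ ∑ A ∈ S'.powerset, ∑ S ∈ Finset.univ.filter
        (fun S : Finset (Fin n) => S ≠ ∅), |ghat fhat Sstar (epsA i₀ sgn A) S| := by
      rw [Finset.sum_comm]
      have step_a : ∑ U ∈ Finset.univ.filter (fun S : Finset (Fin n) => S ≠ ∅),
          |∑ A ∈ S'.powerset, ghat fhat Sstar (epsA i₀ sgn A) U|
          ≤ ∑ U ∈ Finset.univ.filter (fun S : Finset (Fin n) => S ≠ ∅),
            ∑ A ∈ S'.powerset, |ghat fhat Sstar (epsA i₀ sgn A) U| :=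
        Finset.sum_le_sum (fun U _ => Finset.abs_sum_le_sum_abs _ _)
      refine le_trans ?_ step_a
      have step_b : ∑ U ∈ D, |∑ A ∈ S'.powerset, ghat fhat Sstar (epsA i₀ sgn A) U|
          ≤ ∑ U ∈ Finset.univ.filter (fun S : Finset (Fin n) => S ≠ ∅),
            |∑ A ∈ S'.powerset, ghat fhat Sstar (epsA i₀ sgn A) U| := by
        refine Finset.sum_le_sum_of_subset_of_nonneg ?_ (fun _ _ _ => abs_nonneg _)
        intro U hU
        exact Finset.mem_filter.2 ⟨Finset.mem_univ _, (Finset.mem_filter.1 hU).2.1⟩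
      refine le_trans ?_ step_b
      have step_c : ∀ U ∈ D, (|fhat U| - |fhat (U ∪ Sstar)|) * 2 ^ S'.card
          ≤ |∑ A ∈ S'.powerset, ghat fhat Sstar (epsA i₀ sgn A) U| := by
        intro U hU
        rw [K2 U (Finset.mem_filter.1 hU).2.2, abs_mul, abs_of_pos h2d]
        exact mul_le_mul_of_nonneg_right (habs_sub _ _) h2d.le
      calc (W - 2 * R) * 2 ^ S'.card
          ≤ ((∑ U ∈ D, |fhat U|) - ∑ U ∈ D, |fhat (U ∪ Sstar)|) * 2 ^ S'.card := by
            have h8 : W - 2 * R ≤ (∑ U ∈ D, |fhat U|) - ∑ U ∈ D, |fhat (U ∪ Sstar)| := by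
              linarith [f1, f3]
            exact mul_le_mul_of_nonneg_right h8 h2d.le
        _ = ∑ U ∈ D, (|fhat U| - |fhat (U ∪ Sstar)|) * 2 ^ S'.card := by
            rw [← Finset.sum_sub_distrib, Finset.sum_mul]
        _ ≤ ∑ U ∈ D, |∑ A ∈ S'.powerset, ghat fhat Sstar (epsA i₀ sgn A) U| :=
            Finset.sum_le_sum step_c
    have hsum : ∑ _A ∈ S'.powerset, (fhat ∅ + W / (2 * (k:ℝ) * ℓ))
        ≤ ∑ A ∈ S'.powerset, (ghat fhat Sstar (epsA i₀ sgn A) ∅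
            + (∑ S ∈ Finset.univ.filter (fun S : Finset (Fin n) => S ≠ ∅),
                |ghat fhat Sstar (epsA i₀ sgn A) S|) / (2 * (k:ℝ) * ℓ)) := by
      rw [Finset.sum_const, Finset.card_powerset, nsmul_eq_mul, Finset.sum_add_distrib,
        ← Finset.sum_div]
      have hg0 : ∑ A ∈ S'.powerset, ghat fhat Sstar (epsA i₀ sgn A) ∅
          = (fhat ∅ + |fhat Sstar|) * 2 ^ S'.card := by
        rw [K2 ∅ (Finset.empty_inter _), Finset.empty_union, hsgn_mul]
      rw [hg0]
      have hcast : ((2 ^ S'.card : ℕ) : ℝ) = 2 ^ S'.card := by push_cast; ring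
      rw [hcast]
      have f2' : R ≤ (k:ℝ) * ℓ * |fhat Sstar| := by push_cast at f2; linarith
      have hnum : W * 2 ^ S'.card - (2 * (k:ℝ) * ℓ) * |fhat Sstar| * 2 ^ S'.card
          ≤ ∑ A ∈ S'.powerset, ∑ S ∈ Finset.univ.filter
              (fun S : Finset (Fin n) => S ≠ ∅), |ghat fhat Sstar (epsA i₀ sgn A) S| := by
        refine le_trans ?_ hWg
        nlinarith [f2', h2d.le]
      have h6 : (W * 2 ^ S'.card - (2 * (k:ℝ) * ℓ) * |fhat Sstar| * 2 ^ S'.card)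
            / (2 * (k:ℝ) * ℓ)
          ≤ (∑ A ∈ S'.powerset, ∑ S ∈ Finset.univ.filter
              (fun S : Finset (Fin n) => S ≠ ∅), |ghat fhat Sstar (epsA i₀ sgn A) S|)
            / (2 * (k:ℝ) * ℓ) := by
        gcongr
      have h7 : (W * 2 ^ S'.card - (2 * (k:ℝ) * ℓ) * |fhat Sstar| * 2 ^ S'.card)
            / (2 * (k:ℝ) * ℓ)
          = W / (2 * (k:ℝ) * ℓ) * 2 ^ S'.card - |fhat Sstar| * 2 ^ S'.card := by
        field_simp
      linarith [h6, h7]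
    obtain ⟨A, hA, hAineq⟩ := Finset.exists_le_of_sum_le
      (⟨∅, Finset.empty_mem_powerset _⟩ : (S'.powerset).Nonempty) hsum
    obtain ⟨tsel, htsel⟩ : ∃ tsel : Finset (Fin n) → Finset (Fin n),
        ∀ U : Finset (Fin n), (∃ T, T ⊆ Sstar ∧ fhat (U ∪ T) ≠ 0) →
          tsel U ⊆ Sstar ∧ fhat (U ∪ tsel U) ≠ 0 := by
      refine ⟨fun U => if h : ∃ T, T ⊆ Sstar ∧ fhat (U ∪ T) ≠ 0 then h.choose else ∅,
        fun U h => ?_⟩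
      dsimp only
      rw [dif_pos h]
      exact ⟨h.choose_spec.1, h.choose_spec.2⟩
    have hkey : ∀ U : Finset (Fin n), ghat fhat Sstar (epsA i₀ sgn A) U ≠ 0 →
        U ∩ Sstar = ∅ ∧ tsel U ⊆ Sstar ∧ fhat (U ∪ tsel U) ≠ 0 ∧
          (U ∪ tsel U) \ Sstar = U := by
      intro U h
      obtain ⟨h1, hex⟩ := ghat_ne_zero h
      obtain ⟨h2, h3⟩ := htsel U hex
      exact ⟨h1, h2, h3, hrecT U (tsel U) h1 h2⟩
    have hdegG : ∀ U : Finset (Fin n), ghat fhat Sstar (epsA i₀ sgn A) U ≠ 0 →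
        U.card ≤ k := by
      intro U h
      obtain ⟨-, -, h3, -⟩ := hkey U h
      exact le_trans (Finset.card_le_card Finset.subset_union_left) (hdeg _ h3)
    have hlG : ∀ i : Fin n, (Finset.univ.filter (fun S : Finset (Fin n) =>
        ghat fhat Sstar (epsA i₀ sgn A) S ≠ 0 ∧ i ∈ S)).card ≤ ℓ := by
      intro i
      refine le_trans (Finset.card_le_card_of_injOn (fun U => U ∪ tsel U) ?_ ?_) (hl i)
      · intro U hU
        obtain ⟨-, hGnz, hiU⟩ := Finset.mem_filter.1 hU
        obtain ⟨-, -, h3, -⟩ := hkey U hGnz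
        exact Finset.mem_filter.2 ⟨Finset.mem_univ _, h3, Finset.mem_union_left _ hiU⟩
      · intro U hU V hV hUV
        obtain ⟨-, hGnzU, -⟩ := Finset.mem_filter.1 (Finset.mem_coe.1 hU)
        obtain ⟨-, hGnzV, -⟩ := Finset.mem_filter.1 (Finset.mem_coe.1 hV)
        have hUV' : U ∪ tsel U = V ∪ tsel V := hUV
        rw [← (hkey U hGnzU).2.2.2, ← (hkey V hGnzV).2.2.2, hUV']
    have hsuppG : (Finset.univ.filter (fun S : Finset (Fin n) => S ≠ ∅ ∧
        ghat fhat Sstar (epsA i₀ sgn A) S ≠ 0)).card ≤ m := by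
      have hle : (Finset.univ.filter (fun S : Finset (Fin n) => S ≠ ∅ ∧
          ghat fhat Sstar (epsA i₀ sgn A) S ≠ 0)).card
          ≤ ((Finset.univ.filter (fun S : Finset (Fin n) =>
              S ≠ ∅ ∧ fhat S ≠ 0)).erase Sstar).card := by
        refine Finset.card_le_card_of_injOn (fun U => U ∪ tsel U) ?_ ?_
        · intro U hU
          obtain ⟨-, hUne, hGnz⟩ := Finset.mem_filter.1 hU
          obtain ⟨h1, h2, h3, h4⟩ := hkey U hGnz
          refine Finset.mem_erase.2 ⟨?_, Finset.mem_filter.2 ⟨Finset.mem_univ _, ?_, h3⟩⟩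
          · intro heq
            have heq' : U ∪ tsel U = Sstar := heq
            apply hUne
            rw [← h4, heq', Finset.sdiff_self]
          · intro heq
            have heq' : U ∪ tsel U = ∅ := heq
            apply hUne
            have hsub : U ⊆ (∅ : Finset (Fin n)) := heq' ▸ Finset.subset_union_left
            exact Finset.subset_empty.1 hsub
        · intro U hU V hV hUV
          obtain ⟨-, -, hGnzU⟩ := Finset.mem_filter.1 (Finset.mem_coe.1 hU)
          obtain ⟨-, -, hGnzV⟩ := Finset.mem_filter.1 (Finset.mem_coe.1 hV)
          have hUV' : U ∪ tsel U = V ∪ tsel V := hUV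
          rw [← (hkey U hGnzU).2.2.2, ← (hkey V hGnzV).2.2.2, hUV']
      have hec := Finset.card_erase_of_mem hSmem
      omega
    obtain ⟨x', hx'pm, hx'ineq⟩ := ih (ghat fhat Sstar (epsA i₀ sgn A)) hsuppG hdegG hlG
    refine ⟨fun i => if i ∈ Sstar then epsA i₀ sgn A i else x' i, ?_, ?_⟩
    · intro i
      dsimp only
      by_cases hi : i ∈ Sstar
      · rw [if_pos hi]
        simp only [epsA]
        by_cases hii : i = i₀
        · rw [if_pos hii]
          rcases neg_one_pow_eq_or ℝ A.card with he | he <;>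
            rcases hsgn_pm with hs | hs <;> rw [he, hs] <;> norm_num
        · rw [if_neg hii]
          by_cases hiA : i ∈ A
          · rw [if_pos hiA]; exact Or.inr rfl
          · rw [if_neg hiA]; exact Or.inl rfl
      · rw [if_neg hi]
        exact hx'pm i
    · have e1 : fourierFn fhat (fun i => if i ∈ Sstar then epsA i₀ sgn A i else x' i)
          = fourierFn (ghat fhat Sstar (epsA i₀ sgn A))
              (fun i => if i ∈ Sstar then epsA i₀ sgn A i else x' i) :=
        restrict_eq fhat Sstar (epsA i₀ sgn A) _ (fun i hi => if_pos hi)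
      have e2 : fourierFn (ghat fhat Sstar (epsA i₀ sgn A))
              (fun i => if i ∈ Sstar then epsA i₀ sgn A i else x' i)
          = fourierFn (ghat fhat Sstar (epsA i₀ sgn A)) x' :=
        ghat_eval fhat Sstar (epsA i₀ sgn A) _ x' (fun i hi => if_neg hi)
      rw [e1, e2]
      calc fhat ∅ + W / (2 * (k:ℝ) * ℓ)
          ≤ ghat fhat Sstar (epsA i₀ sgn A) ∅
            + (∑ S ∈ Finset.univ.filter (fun S : Finset (Fin n) => S ≠ ∅),
                |ghat fhat Sstar (epsA i₀ sgn A) S|) / (2 * (k:ℝ) * ℓ) := hAineq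
        _ ≤ fourierFn (ghat fhat Sstar (epsA i₀ sgn A)) x' := hx'ineq

theorem stmt_8 (n k ℓ : ℕ) (fhat : Finset (Fin n) → ℝ)
    (hdeg : ∀ S : Finset (Fin n), fhat S ≠ 0 → S.card ≤ k)
    (hℓ : ∀ i : Fin n,
      (Finset.univ.filter (fun S : Finset (Fin n) => fhat S ≠ 0 ∧ i ∈ S)).card ≤ ℓ) :
    ∃ x : Fin n → ℝ, (∀ i, x i = 1 ∨ x i = -1) ∧
      fhat ∅ + (∑ S ∈ Finset.univ.filter (fun S : Finset (Fin n) => S ≠ ∅), |fhat S|)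
          / (2 * k * ℓ)
        ≤ fourierFn fhat x :=
  main_ind k ℓ (Finset.univ.filter
    (fun S : Finset (Fin n) => S ≠ ∅ ∧ fhat S ≠ 0)).card fhat le_rfl hdeg hℓ
end

section
/- Let f : {±1}ⁿ → ℝ be a polynomial of degree at most k with each variable appearing in at most ℓ monomials with nonzero coefficient, and W(f) = Σ_{S≠∅} |f̂(S)|. Then min_{x∈{±1}ⁿ} f(x) ≤ f̂(∅) − W(f)/(2kℓ). -/
open scoped Classical

open Finset

variable {α : Type*} [DecidableEq α]

def flipj (j : α) (U : Finset α) : Finset α := if j ∈ U then U.erase j else insert j U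

lemma flipj_flipj (j : α) (U : Finset α) : flipj j (flipj j U) = U := by
  unfold flipj
  split_ifs with h h1 h2
  · simp at h1
  · simp [Finset.insert_erase h]
  · rw [Finset.erase_insert h]
  · simp at h2

lemma flipj_ne (j : α) (U : Finset α) : flipj j U ≠ U := by
  unfold flipj; split_ifs with h
  · intro he; exact (he ▸ Finset.notMem_erase j U) h
  · intro he; exact h (he ▸ Finset.mem_insert_self j U)

lemma flipj_mem_powerset {S : Finset α} {j : α} (hj : j ∈ S) {U : Finset α}
    (hU : U ∈ S.powerset) : flipj j U ∈ S.powerset := by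
  rw [Finset.mem_powerset] at *
  unfold flipj; split_ifs with h
  · exact (Finset.erase_subset _ _).trans hU
  · exact Finset.insert_subset hj hU

lemma neg_one_pow_flip_inter {T U : Finset α} {j : α} (hj : j ∈ T) :
    ((-1:ℝ))^((T ∩ flipj j U).card) = -((-1:ℝ)^((T ∩ U).card)) := by
  unfold flipj; split_ifs with h
  · rw [Finset.inter_erase, Finset.card_erase_of_mem (Finset.mem_inter.2 ⟨hj, h⟩)]
    have : (T ∩ U).card ≠ 0 := by
      simp only [ne_eq, Finset.card_eq_zero]
      intro he
      exact (Finset.eq_empty_iff_forall_notMem.1 he j) (Finset.mem_inter.2 ⟨hj, h⟩)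
    have hn : (T ∩ U).card = ((T ∩ U).card - 1) + 1 :=
      (Nat.succ_pred_eq_of_pos (Nat.pos_of_ne_zero this)).symm
    conv_rhs => rw [hn]
    rw [pow_succ]; ring
  · rw [Finset.inter_insert_of_mem hj,
      Finset.card_insert_of_notMem (fun hc => h (Finset.mem_inter.1 hc).2), pow_succ]
    ring

lemma neg_one_pow_flip_card {U : Finset α} (j : α) :
    ((-1:ℝ))^((flipj j U).card) = -((-1:ℝ)^(U.card)) := by
  unfold flipj; split_ifs with h
  · rw [Finset.card_erase_of_mem h]
    have : U.card ≠ 0 := by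
      simp only [ne_eq, Finset.card_eq_zero]; rintro rfl; simp at h
    have hn : U.card = (U.card - 1) + 1 :=
      (Nat.succ_pred_eq_of_pos (Nat.pos_of_ne_zero this)).symm
    conv_rhs => rw [hn]
    rw [pow_succ]; ring
  · rw [Finset.card_insert_of_notMem h, pow_succ]; ring

lemma sum_flip_zero {S : Finset α} {j : α} (hj : j ∈ S) (c : Finset α → ℝ)
    (hc : ∀ U ∈ S.powerset, c (flipj j U) = - c U) :
    ∑ U ∈ S.powerset, c U = 0 :=
  Finset.sum_involution (fun U _ => flipj j U)
    (fun U hU => by rw [hc U hU]; ring)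
    (fun U _ _ => flipj_ne j U)
    (fun U hU => flipj_mem_powerset hj hU)
    (fun U _ => flipj_flipj j U)

lemma sum_pow_inter_eq_zero {S T : Finset α} (hTS : T ⊆ S) (hT : T.Nonempty) :
    ∑ U ∈ S.powerset, ((-1:ℝ))^((T ∩ U).card) = 0 := by
  obtain ⟨j, hj⟩ := hT
  exact sum_flip_zero (hTS hj) _ (fun U _ => neg_one_pow_flip_inter hj)

lemma sum_pow_inter_mul_eq_zero {S T : Finset α} (hTS : T ⊆ S) (hT : T ≠ S) :
    ∑ U ∈ S.powerset, ((-1:ℝ))^((T ∩ U).card) * (-1:ℝ)^U.card = 0 := by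
  obtain ⟨j, hjS, hjT⟩ : ∃ j, j ∈ S ∧ j ∉ T := by
    by_contra hcon
    push_neg at hcon
    exact hT (Finset.Subset.antisymm hTS hcon)
  refine sum_flip_zero hjS _ (fun U hU => ?_)
  have h1 : T ∩ flipj j U = T ∩ U := by
    unfold flipj; split_ifs with h
    · rw [Finset.inter_erase, Finset.erase_eq_of_notMem]
      intro hc; exact hjT (Finset.mem_inter.1 hc).1
    · rw [Finset.inter_insert_of_notMem hjT]
  rw [h1, neg_one_pow_flip_card]
  ring

lemma prod_ite_neg_one (T U : Finset α) :
    ∏ i ∈ T, (if i ∈ U then (-1:ℝ) else 1) = (-1)^((T ∩ U).card) := by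
  rw [Finset.prod_ite, Finset.prod_const, Finset.prod_const, one_pow, mul_one,
    Finset.filter_mem_eq_inter]

lemma sum_pow_card_eq_zero {S : Finset α} (hS : S.Nonempty) :
    ∑ U ∈ S.powerset, ((-1:ℝ))^U.card = 0 := by
  obtain ⟨j, hj⟩ := hS
  exact sum_flip_zero hj _ (fun U _ => neg_one_pow_flip_card j)

lemma exists_good (S : Finset α) (hS : S.Nonempty) (f : Finset α → ℝ) :
    ∃ U ⊆ S, (∑ T ∈ S.powerset.filter (fun T => T ≠ ∅),
        f T * ∏ i ∈ T, (if i ∈ U then (-1:ℝ) else 1)) ≤ -|f S| := by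
  classical
  set h : Finset α → ℝ := fun U => ∑ T ∈ S.powerset.filter (fun T => T ≠ ∅),
      f T * (-1:ℝ)^((T ∩ U).card) with hh
  suffices hsuff : ∃ U ⊆ S, h U ≤ -|f S| by
    obtain ⟨U, hU, hle⟩ := hsuff
    refine ⟨U, hU, ?_⟩
    calc (∑ T ∈ S.powerset.filter (fun T => T ≠ ∅),
        f T * ∏ i ∈ T, (if i ∈ U then (-1:ℝ) else 1)) = h U := by
          rw [hh]; exact Finset.sum_congr rfl (fun T _ => by rw [prod_ite_neg_one])
      _ ≤ -|f S| := hle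
  set s : ℝ := if 0 ≤ f S then (1:ℝ) else -1 with hsdef
  have hs : s * f S = |f S| := by
    rw [hsdef]; split_ifs with h0
    · rw [abs_of_nonneg h0, one_mul]
    · rw [abs_of_neg (lt_of_not_ge h0)]; ring
  set w : Finset α → ℝ := fun U => 1 - s * (-1:ℝ)^U.card with hwdef
  have hw0 : ∀ U, 0 ≤ w U := by
    intro U
    show 0 ≤ 1 - s * (-1:ℝ)^U.card
    have h1 : s * (-1:ℝ)^U.card ≤ 1 := by
      rcases Nat.even_or_odd U.card with he | ho
      · rw [he.neg_one_pow, mul_one, hsdef]; split_ifs <;> norm_num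
      · rw [ho.neg_one_pow, hsdef]; split_ifs <;> norm_num
    linarith
  -- A1
  have hA1 : ∑ U ∈ S.powerset, h U = 0 := by
    rw [hh, Finset.sum_comm]
    refine Finset.sum_eq_zero (fun T hT => ?_)
    rw [Finset.mem_filter, Finset.mem_powerset] at hT
    rw [← Finset.mul_sum, sum_pow_inter_eq_zero hT.1 (Finset.nonempty_iff_ne_empty.2 hT.2),
      mul_zero]
  -- A2
  have hA2 : ∑ U ∈ S.powerset, h U * (-1:ℝ)^U.card = f S * 2^S.card := by
    rw [hh]
    simp_rw [Finset.sum_mul]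
    rw [Finset.sum_comm]
    rw [Finset.sum_eq_single_of_mem S
      (by rw [Finset.mem_filter, Finset.mem_powerset]
          exact ⟨Finset.Subset.refl S, Finset.nonempty_iff_ne_empty.1 hS⟩)]
    · have : ∀ U ∈ S.powerset, f S * (-1:ℝ)^((S ∩ U).card) * (-1:ℝ)^U.card = f S := by
        intro U hU
        rw [Finset.mem_powerset] at hU
        rw [Finset.inter_eq_right.2 hU, mul_assoc, ← pow_add,
          Even.neg_one_pow ⟨U.card, by ring⟩, mul_one]
      rw [Finset.sum_congr rfl this, Finset.sum_const, Finset.card_powerset,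
        nsmul_eq_mul, mul_comm]
      norm_num
    · intro T hT hTne
      rw [Finset.mem_filter, Finset.mem_powerset] at hT
      simp_rw [mul_assoc]
      rw [← Finset.mul_sum, sum_pow_inter_mul_eq_zero hT.1 hTne, mul_zero]
  have hWsum : ∑ U ∈ S.powerset, w U = 2^S.card := by
    rw [hwdef]
    rw [Finset.sum_sub_distrib, Finset.sum_const, Finset.card_powerset, ← Finset.mul_sum,
      sum_pow_card_eq_zero hS, mul_zero, sub_zero, nsmul_eq_mul, mul_one]
    norm_num
  have hkey : ∑ U ∈ S.powerset, w U * h U = -|f S| * 2^S.card := by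
    have : ∀ U, w U * h U = h U - s * (h U * (-1:ℝ)^U.card) := by
      intro U; rw [hwdef]; ring
    rw [Finset.sum_congr rfl (fun U _ => this U), Finset.sum_sub_distrib, hA1,
      ← Finset.mul_sum, hA2]
    rw [← hs]; ring
  by_contra hcon
  push_neg at hcon
  -- find U0 with w U0 > 0
  obtain ⟨U0, hU0S, hU0⟩ : ∃ U0 ∈ S.powerset, 0 < w U0 := by
    rcases (show s = 1 ∨ s = -1 by rw [hsdef]; split_ifs <;> simp) with h1 | h1
    · obtain ⟨j, hj⟩ := hS
      refine ⟨{j}, Finset.mem_powerset.2 (Finset.singleton_subset_iff.2 hj), ?_⟩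
      rw [hwdef]; simp [h1]
    · refine ⟨∅, Finset.mem_powerset.2 (Finset.empty_subset S), ?_⟩
      rw [hwdef]; simp [h1]
  have hlt : ∑ U ∈ S.powerset, w U * (-|f S|) < ∑ U ∈ S.powerset, w U * h U := by
    refine Finset.sum_lt_sum (fun U hU => ?_) ⟨U0, hU0S, ?_⟩
    · exact mul_le_mul_of_nonneg_left
        (le_of_lt (hcon U (Finset.mem_powerset.1 hU))) (hw0 U)
    · exact (mul_lt_mul_iff_right₀ hU0).2 (hcon U0 (Finset.mem_powerset.1 hU0S))
  rw [hkey, ← Finset.sum_mul, hWsum] at hlt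
  linarith

def sumFn {α : Type*} [Fintype α] [DecidableEq α] (f : Finset α → ℝ) (x : α → ℝ) : ℝ :=
  ∑ S : Finset α, f S * ∏ i ∈ S, x i

variable [Fintype α]

lemma key_zero (fhat : Finset α → ℝ) (hzero : ∀ S, S ≠ ∅ → fhat S = 0) (c : ℝ) :
    ∃ x : α → ℝ, (∀ i, x i = 1 ∨ x i = -1) ∧
      sumFn fhat x ≤ fhat ∅ -
        (∑ S ∈ Finset.univ.filter (fun S : Finset α => S ≠ ∅), |fhat S|) / c := by
  refine ⟨fun _ => 1, fun i => Or.inl rfl, ?_⟩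
  have hW : (∑ S ∈ Finset.univ.filter (fun S : Finset α => S ≠ ∅), |fhat S|) = 0 :=
    Finset.sum_eq_zero (fun S hS => by
      rw [hzero S (Finset.mem_filter.1 hS).2, abs_zero])
  have hsum : sumFn fhat (fun _ => 1) = fhat ∅ := by
    unfold sumFn
    rw [Finset.sum_eq_single_of_mem ∅ (Finset.mem_univ _)
      (fun b _ hb => by rw [hzero b hb, zero_mul])]
    simp
  rw [hsum, hW, zero_div, sub_zero]

lemma key (k l : ℕ) :
    ∀ (m : ℕ) (F : Finset α), F.card ≤ m → ∀ (fhat : Finset α → ℝ),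
    (∀ S, fhat S ≠ 0 → S ⊆ F) →
    (∀ S, fhat S ≠ 0 → S.card ≤ k) →
    (∀ i, (Finset.univ.filter (fun S : Finset α => fhat S ≠ 0 ∧ i ∈ S)).card ≤ l) →
    ∃ x : α → ℝ, (∀ i, x i = 1 ∨ x i = -1) ∧
      sumFn fhat x ≤ fhat ∅ -
        (∑ S ∈ Finset.univ.filter (fun S : Finset α => S ≠ ∅), |fhat S|) / (2 * k * l) := by
  intro m
  induction m with
  | zero =>
    intro F hF fhat hsupp hdeg hl
    have hF0 : F = ∅ := Finset.card_eq_zero.1 (Nat.le_zero.1 hF)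
    refine key_zero fhat (fun S hS => ?_) _
    by_contra h0
    exact hS (Finset.subset_empty.1 (hF0 ▸ hsupp S h0))
  | succ m ih =>
    intro F hF fhat hsupp hdeg hl
    by_cases hzero : ∀ S, S ≠ ∅ → fhat S = 0
    · exact key_zero fhat hzero _
    push_neg at hzero
    obtain ⟨S₀, hS₀ne, hS₀⟩ := hzero
    set N : Finset (Finset α) :=
      Finset.univ.filter (fun S => S ≠ ∅ ∧ fhat S ≠ 0) with hN
    have hNne : N.Nonempty :=
      ⟨S₀, by rw [hN, Finset.mem_filter]; exact ⟨Finset.mem_univ _, Finset.nonempty_iff_ne_empty.1 hS₀ne, hS₀⟩⟩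
    obtain ⟨Sst, hSstN, hSstMax⟩ := Finset.exists_max_image N (fun S => |fhat S|) hNne
    rw [hN, Finset.mem_filter] at hSstN
    obtain ⟨-, hSstne, hSst0⟩ := hSstN
    have hSstnonempty : Sst.Nonempty := Finset.nonempty_iff_ne_empty.2 hSstne
    set M : ℝ := |fhat Sst| with hM
    have hMpos : 0 < M := abs_pos.2 hSst0
    have hSsubF : Sst ⊆ F := hsupp Sst hSst0
    have hk1 : 1 ≤ k :=
      le_trans (Finset.Nonempty.card_pos hSstnonempty) (hdeg Sst hSst0)
    have hl1 : 1 ≤ l := by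
      obtain ⟨j, hj⟩ := hSstnonempty
      refine le_trans ?_ (hl j)
      rw [Nat.one_le_iff_ne_zero, ← Nat.pos_iff_ne_zero, Finset.card_pos]
      exact ⟨Sst, Finset.mem_filter.2 ⟨Finset.mem_univ _, hSst0, hj⟩⟩
    -- the averaging choice
    obtain ⟨U, hUS, hUineq⟩ := exists_good Sst hSstnonempty fhat
    set y : α → ℝ := fun i => if i ∈ U then -1 else 1 with hy
    have hypm : ∀ i, y i = 1 ∨ y i = -1 := by
      intro i; rw [hy]; dsimp only; split_ifs <;> simp
    have hyabs : ∀ T : Finset α, |∏ i ∈ T, y i| = 1 := by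
      intro T
      rw [Finset.abs_prod]
      refine Finset.prod_eq_one (fun i _ => ?_)
      rcases hypm i with h | h <;> rw [h] <;> norm_num
    -- the restricted polynomial
    set g : Finset α → ℝ := fun S =>
      if S ∩ Sst = ∅ then ∑ T ∈ Sst.powerset, fhat (S ∪ T) * ∏ i ∈ T, y i else 0 with hg
    have hgval : ∀ S, S ∩ Sst = ∅ →
        g S = ∑ T ∈ Sst.powerset, fhat (S ∪ T) * ∏ i ∈ T, y i := by
      intro S hS; rw [hg]; exact if_pos hS
    have hgzero : ∀ S, S ∩ Sst ≠ ∅ → g S = 0 := by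
      intro S hS; rw [hg]; exact if_neg hS
    have hchoice : ∀ S, g S ≠ 0 → S ∩ Sst = ∅ ∧ ∃ T, T ⊆ Sst ∧ fhat (S ∪ T) ≠ 0 := by
      intro S hgS
      have hdisj : S ∩ Sst = ∅ := by
        by_contra hc; exact hgS (hgzero S hc)
      refine ⟨hdisj, ?_⟩
      by_contra hc
      push_neg at hc
      refine hgS ?_
      rw [hgval S hdisj]
      refine Finset.sum_eq_zero (fun T hT => ?_)
      rw [hc T (Finset.mem_powerset.1 hT), zero_mul]
    -- support of g
    have hgsupp : ∀ S, g S ≠ 0 → S ⊆ F \ Sst := by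
      intro S hgS
      obtain ⟨hdisj, T, hTS, hT0⟩ := hchoice S hgS
      rw [Finset.subset_sdiff]
      exact ⟨(Finset.subset_union_left).trans (hsupp _ hT0),
        Finset.disjoint_iff_inter_eq_empty.2 hdisj⟩
    -- degree of g
    have hgdeg : ∀ S, g S ≠ 0 → S.card ≤ k := by
      intro S hgS
      obtain ⟨-, T, hTS, hT0⟩ := hchoice S hgS
      exact le_trans (Finset.card_le_card Finset.subset_union_left) (hdeg _ hT0)
    -- recovery: if S ∩ Sst = ∅ and T ⊆ Sst then (S ∪ T) \ Sst = S and (S ∪ T) ∩ Sst = T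
    have hrec1 : ∀ S T : Finset α, S ∩ Sst = ∅ → T ⊆ Sst → (S ∪ T) \ Sst = S := by
      intro S T hS hT
      rw [Finset.union_sdiff_distrib, Finset.sdiff_eq_empty_iff_subset.2 hT,
        Finset.union_empty,
        (Finset.sdiff_eq_self_iff_disjoint).2 (Finset.disjoint_iff_inter_eq_empty.2 hS)]
    have hrec2 : ∀ S T : Finset α, S ∩ Sst = ∅ → T ⊆ Sst → (S ∪ T) ∩ Sst = T := by
      intro S T hS hT
      rw [Finset.union_inter_distrib_right, hS, Finset.empty_union,
        Finset.inter_eq_left.2 hT]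
    -- each-variable count for g
    have hgl : ∀ i, (Finset.univ.filter (fun S : Finset α => g S ≠ 0 ∧ i ∈ S)).card ≤ l := by
      intro i
      classical
      set Tof : Finset α → Finset α := fun S =>
        if h : ∃ T, T ⊆ Sst ∧ fhat (S ∪ T) ≠ 0 then h.choose else ∅ with hTof
      have hTofspec : ∀ S, g S ≠ 0 → Tof S ⊆ Sst ∧ fhat (S ∪ Tof S) ≠ 0 := by
        intro S hgS
        obtain ⟨-, hex⟩ := hchoice S hgS
        rw [hTof]; dsimp only; rw [dif_pos hex]
        exact hex.choose_spec
      refine le_trans (Finset.card_le_card_of_injOn (fun S => S ∪ Tof S) ?_ ?_) (hl i)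
      · intro S hS
        rw [Finset.mem_coe, Finset.mem_filter] at hS ⊢
        obtain ⟨-, hgS, hiS⟩ := hS
        exact ⟨Finset.mem_univ _, (hTofspec S hgS).2,
          Finset.mem_union_left _ hiS⟩
      · intro S1 h1 S2 h2 heq
        simp only [Finset.coe_filter, Set.mem_setOf_eq] at h1 h2
        have e1 := hrec1 S1 (Tof S1) (hchoice S1 h1.2.1).1 (hTofspec S1 h1.2.1).1
        have e2 := hrec1 S2 (Tof S2) (hchoice S2 h2.2.1).1 (hTofspec S2 h2.2.1).1
        have heq' : S1 ∪ Tof S1 = S2 ∪ Tof S2 := heq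
        rw [← e1, ← e2, heq']
    -- reindexing identity
    have hreindex : ∀ x : α → ℝ, (∀ i ∈ Sst, x i = y i) → sumFn fhat x = sumFn g x := by
      intro x hx
      have step1 : sumFn fhat x =
          ∑ P ∈ (Finset.univ.filter (fun S : Finset α => S ∩ Sst = ∅)) ×ˢ Sst.powerset,
            fhat (P.1 ∪ P.2) * ((∏ i ∈ P.1, x i) * ∏ i ∈ P.2, y i) := by
        unfold sumFn
        refine Finset.sum_nbij' (fun R => (R \ Sst, R ∩ Sst)) (fun P => P.1 ∪ P.2) ?_ ?_ ?_ ?_ ?_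
        · intro R _
          rw [Finset.mem_product]
          refine ⟨Finset.mem_filter.2 ⟨Finset.mem_univ _, ?_⟩,
            Finset.mem_powerset.2 Finset.inter_subset_right⟩
          rw [Finset.sdiff_inter_self]
        · intro P _; exact Finset.mem_univ _
        · intro R _
          dsimp only
          rw [Finset.sdiff_union_inter]
        · intro P hP
          rw [Finset.mem_product] at hP
          obtain ⟨h1, h2⟩ := hP
          rw [Finset.mem_filter] at h1
          rw [Finset.mem_powerset] at h2
          rw [hrec1 _ _ h1.2 h2, hrec2 _ _ h1.2 h2]
        · intro R _
          dsimp only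
          rw [Finset.sdiff_union_inter]
          congr 1
          have hyx : ∏ i ∈ R ∩ Sst, y i = ∏ i ∈ R ∩ Sst, x i :=
            Finset.prod_congr rfl (fun i hi => (hx i (Finset.mem_inter.1 hi).2).symm)
          rw [hyx, ← Finset.prod_union (Finset.disjoint_sdiff_inter R Sst),
            Finset.sdiff_union_inter]
      rw [step1, Finset.sum_product]
      have step2 : ∀ S ∈ Finset.univ.filter (fun S : Finset α => S ∩ Sst = ∅),
          (∑ T ∈ Sst.powerset, fhat (S ∪ T) * ((∏ i ∈ S, x i) * ∏ i ∈ T, y i))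
            = g S * ∏ i ∈ S, x i := by
        intro S hS
        rw [hgval S (Finset.mem_filter.1 hS).2, Finset.sum_mul]
        exact Finset.sum_congr rfl (fun T _ => by ring)
      rw [Finset.sum_congr rfl step2]
      unfold sumFn
      refine Finset.sum_filter_of_ne (fun S _ hS0 => ?_)
      by_contra hc
      exact hS0 (by rw [hgzero S hc, zero_mul])
    -- value at ∅
    have hgempty : g ∅ ≤ fhat ∅ - M := by
      rw [hgval ∅ (Finset.empty_inter Sst)]
      have hmem : (∅ : Finset α) ∈ Sst.powerset :=
        Finset.mem_powerset.2 (Finset.empty_subset Sst)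
      rw [← Finset.add_sum_erase _ _ hmem, ← Finset.filter_ne']
      have h2 : ∑ T ∈ Sst.powerset.filter (fun T => T ≠ ∅), fhat (∅ ∪ T) * ∏ i ∈ T, y i
          = ∑ T ∈ Sst.powerset.filter (fun T => T ≠ ∅), fhat T * ∏ i ∈ T, y i :=
        Finset.sum_congr rfl (fun T _ => by rw [Finset.empty_union])
      rw [h2]
      have h3 : fhat (∅ ∪ ∅) * ∏ i ∈ (∅ : Finset α), y i = fhat ∅ := by simp
      rw [h3]
      have h4 : ∑ T ∈ Sst.powerset.filter (fun T => T ≠ ∅), fhat T * ∏ i ∈ T, y i ≤ -M :=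
        hUineq
      linarith
    -- weight comparison
    have habs_term : ∀ S T : Finset α, |fhat (S ∪ T) * ∏ i ∈ T, y i| = |fhat (S ∪ T)| := by
      intro S T
      rw [abs_mul, hyabs, mul_one]
    have hWterm : ∀ S : Finset α, S ∩ Sst = ∅ →
        |fhat S| - (∑ T ∈ Sst.powerset.filter (fun T => T ≠ ∅), |fhat (S ∪ T)|) ≤ |g S| := by
      intro S hS
      have hsplit : g S = fhat S +
          ∑ T ∈ Sst.powerset.filter (fun T => T ≠ ∅), fhat (S ∪ T) * ∏ i ∈ T, y i := by
        rw [hgval S hS]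
        have hmem : (∅ : Finset α) ∈ Sst.powerset :=
          Finset.mem_powerset.2 (Finset.empty_subset Sst)
        rw [← Finset.add_sum_erase _ _ hmem, ← Finset.filter_ne']
        congr 1
        simp
      have hrest : |g S - fhat S| ≤
          ∑ T ∈ Sst.powerset.filter (fun T => T ≠ ∅), |fhat (S ∪ T)| := by
        rw [hsplit, add_sub_cancel_left]
        refine le_trans (Finset.abs_sum_le_sum_abs _ _) ?_
        exact le_of_eq (Finset.sum_congr rfl (fun T _ => habs_term S T))
      have h6 := abs_sub_abs_le_abs_sub (fhat S) (g S)
      have h7 : |fhat S - g S| = |g S - fhat S| := abs_sub_comm _ _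
      linarith
    -- bound on total weight touching Sst
    have hWtouch : ∑ R ∈ Finset.univ.filter (fun R : Finset α => R ∩ Sst ≠ ∅), |fhat R|
        ≤ (k : ℝ) * l * M := by
      have he : ∑ R ∈ Finset.univ.filter (fun R : Finset α => R ∩ Sst ≠ ∅), |fhat R|
          = ∑ R ∈ (Finset.univ.filter (fun R : Finset α => R ∩ Sst ≠ ∅)).filter
              (fun R => fhat R ≠ 0), |fhat R| := by
        refine (Finset.sum_subset (Finset.filter_subset _ _) (fun R hR hnR => ?_)).symm
        have h0 : ¬ fhat R ≠ 0 := fun h => hnR (Finset.mem_filter.2 ⟨hR, h⟩)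
        rw [not_not.1 h0, abs_zero]
      rw [he]
      have hcard : ((Finset.univ.filter (fun R : Finset α => R ∩ Sst ≠ ∅)).filter
          (fun R => fhat R ≠ 0)).card ≤ k * l := by
        have hsub : (Finset.univ.filter (fun R : Finset α => R ∩ Sst ≠ ∅)).filter
            (fun R => fhat R ≠ 0) ⊆ Sst.biUnion
              (fun i => Finset.univ.filter (fun S : Finset α => fhat S ≠ 0 ∧ i ∈ S)) := by
          intro R hR
          rw [Finset.mem_filter, Finset.mem_filter] at hR
          obtain ⟨⟨-, hRSst⟩, hR0⟩ := hR
          obtain ⟨i, hi⟩ := Finset.nonempty_iff_ne_empty.2 hRSst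
          rw [Finset.mem_inter] at hi
          exact Finset.mem_biUnion.2 ⟨i, hi.2,
            Finset.mem_filter.2 ⟨Finset.mem_univ _, hR0, hi.1⟩⟩
        refine le_trans (Finset.card_le_card hsub) ?_
        refine le_trans (Finset.card_biUnion_le) ?_
        refine le_trans (Finset.sum_le_sum (fun i _ => hl i)) ?_
        rw [Finset.sum_const, smul_eq_mul]
        exact Nat.mul_le_mul_right l (hdeg Sst hSst0)
      have hboundM : ∀ R ∈ (Finset.univ.filter (fun R : Finset α => R ∩ Sst ≠ ∅)).filter
          (fun R => fhat R ≠ 0), |fhat R| ≤ M := by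
        intro R hR
        rw [Finset.mem_filter, Finset.mem_filter] at hR
        obtain ⟨⟨-, hRSst⟩, hR0⟩ := hR
        have hRne : R ≠ ∅ := by
          intro hc
          exact hRSst (by rw [hc, Finset.empty_inter])
        exact hSstMax R (Finset.mem_filter.2 ⟨Finset.mem_univ _, hRne, hR0⟩)
      refine le_trans (Finset.sum_le_card_nsmul _ _ M hboundM) ?_
      rw [nsmul_eq_mul]
      have : ((Finset.univ.filter (fun R : Finset α => R ∩ Sst ≠ ∅)).filter
          (fun R => fhat R ≠ 0)).card ≤ ((k*l : ℕ) : ℝ) := by exact_mod_cast hcard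
      calc (((Finset.univ.filter (fun R : Finset α => R ∩ Sst ≠ ∅)).filter
          (fun R => fhat R ≠ 0)).card : ℝ) * M ≤ ((k*l : ℕ) : ℝ) * M :=
            mul_le_mul_of_nonneg_right this (le_of_lt hMpos)
        _ = (k : ℝ) * l * M := by push_cast; ring
    -- sum of perturbations
    have hpert : ∑ S ∈ (Finset.univ.filter (fun S : Finset α => S ≠ ∅)).filter
          (fun S => S ∩ Sst = ∅),
          (∑ T ∈ Sst.powerset.filter (fun T => T ≠ ∅), |fhat (S ∪ T)|)
        ≤ ∑ R ∈ Finset.univ.filter (fun R : Finset α => R ∩ Sst ≠ ∅), |fhat R| := by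
      rw [← Finset.sum_product']
      set A2 := ((Finset.univ.filter (fun S : Finset α => S ≠ ∅)).filter
          (fun S => S ∩ Sst = ∅)) ×ˢ (Sst.powerset.filter (fun T => T ≠ ∅)) with hA2
      have hmemA2 : ∀ P ∈ A2, P.1 ∩ Sst = ∅ ∧ P.2 ⊆ Sst ∧ P.2 ≠ ∅ := by
        intro P hP
        rw [hA2, Finset.mem_product] at hP
        obtain ⟨hPa, hPb⟩ := hP
        rw [Finset.mem_filter] at hPa
        rw [Finset.mem_filter] at hPb
        obtain ⟨hb1, hb2⟩ := hPb
        rw [Finset.mem_powerset] at hb1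
        exact ⟨hPa.2, hb1, hb2⟩
      have hinj : ∀ P1 ∈ A2, ∀ P2 ∈ A2, P1.1 ∪ P1.2 = P2.1 ∪ P2.2 → P1 = P2 := by
        intro P1 h1 P2 h2 heq
        obtain ⟨ha1, hb1, -⟩ := hmemA2 P1 h1
        obtain ⟨ha2, hb2, -⟩ := hmemA2 P2 h2
        have e1 := hrec1 P1.1 P1.2 ha1 hb1
        have e2 := hrec1 P2.1 P2.2 ha2 hb2
        have f1 := hrec2 P1.1 P1.2 ha1 hb1
        have f2 := hrec2 P2.1 P2.2 ha2 hb2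
        have : P1.1 = P2.1 := by rw [← e1, ← e2, heq]
        have h22 : P1.2 = P2.2 := by rw [← f1, ← f2, heq]
        exact Prod.ext this h22
      have himg : ∑ P ∈ A2, |fhat (P.1 ∪ P.2)|
          = ∑ R ∈ A2.image (fun P => P.1 ∪ P.2), |fhat R| :=
        (Finset.sum_image (f := fun R => |fhat R|)
          (g := fun P : Finset α × Finset α => P.1 ∪ P.2) hinj).symm
      rw [himg]
      refine Finset.sum_le_sum_of_subset_of_nonneg ?_ (fun R _ _ => abs_nonneg _)
      intro R hR
      rw [Finset.mem_image] at hR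
      obtain ⟨P, hP, rfl⟩ := hR
      obtain ⟨ha, hb, hbne⟩ := hmemA2 P hP
      rw [Finset.mem_filter]
      refine ⟨Finset.mem_univ _, ?_⟩
      rw [hrec2 P.1 P.2 ha hb]
      exact hbne
    -- main weight bound
    have hWbound : (∑ S ∈ Finset.univ.filter (fun S : Finset α => S ≠ ∅), |fhat S|)
        - (∑ S ∈ Finset.univ.filter (fun S : Finset α => S ≠ ∅), |g S|)
        ≤ 2 * ((k : ℝ) * l * M) := by
      have hsplitWf : (∑ S ∈ Finset.univ.filter (fun S : Finset α => S ≠ ∅), |fhat S|)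
          = (∑ S ∈ (Finset.univ.filter (fun S : Finset α => S ≠ ∅)).filter
              (fun S => S ∩ Sst = ∅), |fhat S|)
            + ∑ S ∈ (Finset.univ.filter (fun S : Finset α => S ≠ ∅)).filter
              (fun S => ¬ S ∩ Sst = ∅), |fhat S| :=
        (Finset.sum_filter_add_sum_filter_not _ _ _).symm
      have hpart2 : ∑ S ∈ (Finset.univ.filter (fun S : Finset α => S ≠ ∅)).filter
            (fun S => ¬ S ∩ Sst = ∅), |fhat S|
          ≤ ∑ R ∈ Finset.univ.filter (fun R : Finset α => R ∩ Sst ≠ ∅), |fhat R| := by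
        refine Finset.sum_le_sum_of_subset_of_nonneg ?_ (fun R _ _ => abs_nonneg _)
        intro S hS
        rw [Finset.mem_filter, Finset.mem_filter] at hS
        exact Finset.mem_filter.2 ⟨Finset.mem_univ _, hS.2⟩
      have hWg1 : ∑ S ∈ (Finset.univ.filter (fun S : Finset α => S ≠ ∅)).filter
            (fun S => S ∩ Sst = ∅), |g S|
          ≤ ∑ S ∈ Finset.univ.filter (fun S : Finset α => S ≠ ∅), |g S| :=
        Finset.sum_le_sum_of_subset_of_nonneg (Finset.filter_subset _ _)
          (fun R _ _ => abs_nonneg _)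
      have hWg2 : (∑ S ∈ (Finset.univ.filter (fun S : Finset α => S ≠ ∅)).filter
            (fun S => S ∩ Sst = ∅), |fhat S|)
          - (∑ S ∈ (Finset.univ.filter (fun S : Finset α => S ≠ ∅)).filter
              (fun S => S ∩ Sst = ∅),
              (∑ T ∈ Sst.powerset.filter (fun T => T ≠ ∅), |fhat (S ∪ T)|))
          ≤ ∑ S ∈ (Finset.univ.filter (fun S : Finset α => S ≠ ∅)).filter
              (fun S => S ∩ Sst = ∅), |g S| := by
        rw [← Finset.sum_sub_distrib]
        refine Finset.sum_le_sum (fun S hS => ?_)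
        rw [Finset.mem_filter] at hS
        exact hWterm S hS.2
      linarith
    -- apply the induction hypothesis
    have hFcard : (F \ Sst).card ≤ m := by
      have h1 : (F \ Sst).card = F.card - Sst.card := Finset.card_sdiff_of_subset hSsubF
      have h2 : 1 ≤ Sst.card := hSstnonempty.card_pos
      omega
    obtain ⟨x', hx'pm, hx'le⟩ := ih (F \ Sst) hFcard g hgsupp hgdeg hgl
    set x : α → ℝ := fun i => if i ∈ Sst then y i else x' i with hx
    have hxpm : ∀ i, x i = 1 ∨ x i = -1 := by
      intro i; rw [hx]; dsimp only; split_ifs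
      · exact hypm i
      · exact hx'pm i
    have hxy : ∀ i ∈ Sst, x i = y i := by
      intro i hi; rw [hx]; dsimp only; rw [if_pos hi]
    have hgx : sumFn g x = sumFn g x' := by
      unfold sumFn
      refine Finset.sum_congr rfl (fun S _ => ?_)
      by_cases hgS : g S = 0
      · rw [hgS, zero_mul, zero_mul]
      · have hdisj := (hchoice S hgS).1
        congr 1
        refine Finset.prod_congr rfl (fun i hi => ?_)
        have hiS : i ∉ Sst := by
          intro hc
          exact (Finset.eq_empty_iff_forall_notMem.1 hdisj i) (Finset.mem_inter.2 ⟨hi, hc⟩)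
        rw [hx]; dsimp only; rw [if_neg hiS]
    refine ⟨x, hxpm, ?_⟩
    have hk0 : (0:ℝ) < k := by exact_mod_cast hk1
    have hl0 : (0:ℝ) < l := by exact_mod_cast hl1
    have hDpos : (0:ℝ) < 2 * k * l := by positivity
    calc sumFn fhat x = sumFn g x := hreindex x hxy
      _ = sumFn g x' := hgx
      _ ≤ g ∅ - (∑ S ∈ Finset.univ.filter (fun S : Finset α => S ≠ ∅), |g S|)
            / (2 * k * l) := hx'le
      _ ≤ fhat ∅ - (∑ S ∈ Finset.univ.filter (fun S : Finset α => S ≠ ∅), |fhat S|)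
            / (2 * k * l) := by
          have h1 : (∑ S ∈ Finset.univ.filter (fun S : Finset α => S ≠ ∅), |fhat S|)
              - (∑ S ∈ Finset.univ.filter (fun S : Finset α => S ≠ ∅), |g S|)
              ≤ (2 * k * l) * M := by
            calc _ ≤ 2 * ((k : ℝ) * l * M) := hWbound
              _ = (2 * k * l) * M := by ring
          have h2 : ((∑ S ∈ Finset.univ.filter (fun S : Finset α => S ≠ ∅), |fhat S|)
              - (∑ S ∈ Finset.univ.filter (fun S : Finset α => S ≠ ∅), |g S|))
              / (2 * k * l) ≤ M := by
            rw [div_le_iff₀ hDpos]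
            linarith [h1, mul_comm ((2:ℝ) * k * l) M]
          rw [sub_div] at h2
          linarith [hgempty]

theorem stmt_9 (n k ℓ : ℕ) (fhat : Finset (Fin n) → ℝ)
    (hdeg : ∀ S : Finset (Fin n), fhat S ≠ 0 → S.card ≤ k)
    (hℓ : ∀ i : Fin n,
      (Finset.univ.filter (fun S : Finset (Fin n) => fhat S ≠ 0 ∧ i ∈ S)).card ≤ ℓ) :
    ∃ x : Fin n → ℝ, (∀ i, x i = 1 ∨ x i = -1) ∧
      fourierFn fhat x ≤ fhat ∅ - (∑ S ∈ Finset.univ.filter (fun S : Finset (Fin n) => S ≠ ∅), |fhat S|)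
          / (2 * k * ℓ)
         := by
  obtain ⟨x, hx, hle⟩ := key k ℓ (Finset.univ : Finset (Fin n)).card Finset.univ le_rfl fhat
    (fun S _ => Finset.subset_univ S) hdeg hℓ
  exact ⟨x, hx, hle⟩
end

section
/- With notation as in the quantum-classical correspondence, the Fourier coefficients of f_H satisfy f̂_H(s) = Ĥ_s · 3^{−|s|/2} for every s ∈ {I,X,Y,Z}ⁿ, where |s| = |{i : s_i ≠ I}| and s is identified with a subset of [2n] via I ↦ ∅, X ↦ {first coordinate of block}, Z ↦ {second coordinate}, Y ↦ {both coordinates}. -/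
noncomputable section
open Complex Matrix
open scoped Classical

/-- The four Pauli matrices I, X, Y, Z. -/
def pauli : Fin 4 → Matrix (Fin 2) (Fin 2) ℂ := ![1, σX, σY, σZ]

/-- The n-qubit Pauli string s₁ ⊗ s₂ ⊗ ⋯ ⊗ sₙ, as a matrix indexed by Fin n → Fin 2. -/
def pauliString {n : ℕ} (s : Fin n → Fin 4) :
    Matrix (Fin n → Fin 2) (Fin n → Fin 2) ℂ :=
  fun v w => ∏ i, pauli (s i) (v i) (w i)

/-- The Hamiltonian H = Σ_s Ĥ_s s₁⊗⋯⊗sₙ with real Pauli coefficients Ĥ. -/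
def hamOf {n : ℕ} (Hhat : (Fin n → Fin 4) → ℝ) :
    Matrix (Fin n → Fin 2) (Fin n → Fin 2) ℂ :=
  ∑ s : Fin n → Fin 4, (Hhat s : ℂ) • pauliString s

/-- The weight |s| of a Pauli string: the number of non-identity tensor factors. -/
def weight {n : ℕ} (s : Fin n → Fin 4) : ℕ :=
  (Finset.univ.filter (fun i => s i ≠ 0)).card

/-- The product state ψ₁ ⊗ ⋯ ⊗ ψₙ. -/
def prodState {n : ℕ} (ψ : Fin n → Fin 2 → ℂ) : (Fin n → Fin 2) → ℂ :=
  fun v => ∏ i, ψ i (v i)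

/-- Expectation value ⟨Ψ|M|Ψ⟩ for an n-qubit operator. -/
def expValN {n : ℕ} (M : Matrix (Fin n → Fin 2) (Fin n → Fin 2) ℂ)
    (Ψ : (Fin n → Fin 2) → ℂ) : ℂ :=
  ∑ v, ∑ w, (starRingEnd ℂ) (Ψ v) * M v w * Ψ w

/-- Pauli correction selecting a tetrahedron state: (+,+)↦I, (−,+)↦Z, (+,−)↦X, (−,−)↦Y. -/
def tetraM (a b : ℝ) : Matrix (Fin 2) (Fin 2) ℂ :=
  if a = 1 then (if b = 1 then 1 else σX) else (if b = 1 then σZ else σY)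

/-- The tetrahedron state labelled by (a,b) ∈ {±1}². -/
def tetra (a b : ℝ) : Fin 2 → ℂ := (tetraM a b).mulVec ψpp

/-!
Expanding `H` in the Pauli basis and using that a Pauli string factorises over the product state,
`f_H(x) = Σ_s Ĥ_s ∏ᵢ ⟨ψ_{x⁽ⁱ⁾}| sᵢ |ψ_{x⁽ⁱ⁾}⟩`. Each tetrahedron state is `M ψ₊₊` for a Pauli `M`,
and conjugating a Pauli `P` by a Pauli `M` gives `±P`, with the sign `1, x₁, x₁x₂, x₂` for
`P = I, X, Y, Z`. Finally `ψ₊₊` has Bloch vector `(1, 1, 1)/√3`, so each non-identity factor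
contributes `3^{-1/2}`.
-/

lemma expValN_eq_dotProduct {n : ℕ} (M : Matrix (Fin n → Fin 2) (Fin n → Fin 2) ℂ)
    (Ψ : (Fin n → Fin 2) → ℂ) : expValN M Ψ = star Ψ ⬝ᵥ (M *ᵥ Ψ) := by
  simp only [expValN, dotProduct, mulVec, Finset.mul_sum, mul_assoc, Pi.star_apply,
    Complex.star_def]

lemma expValN_hamOf {n : ℕ} (Hhat : (Fin n → Fin 4) → ℝ) (Ψ : (Fin n → Fin 2) → ℂ) :
    expValN (hamOf Hhat) Ψ = ∑ s, (Hhat s : ℂ) * expValN (pauliString s) Ψ := by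
  simp only [expValN_eq_dotProduct, hamOf, sum_mulVec, dotProduct_sum, smul_mulVec,
    dotProduct_smul, smul_eq_mul]

lemma expValN_pauliString_prodState {n : ℕ} (s : Fin n → Fin 4) (ψ : Fin n → Fin 2 → ℂ) :
    expValN (pauliString s) (prodState ψ) = ∏ i, star (ψ i) ⬝ᵥ (pauli (s i) *ᵥ ψ i) := by
  simp only [dotProduct, mulVec, Finset.mul_sum, Fintype.prod_sum, expValN, pauliString, prodState,
    Pi.star_apply, Complex.star_def, map_prod, ← Finset.prod_mul_distrib, mul_assoc]

lemma star_mulVec_dotProduct_mulVec_mulVec {m α : Type*} [Fintype m] [CommSemiring α] [StarRing α]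
    (A B : Matrix m m α) (v : m → α) :
    star (A *ᵥ v) ⬝ᵥ (B *ᵥ (A *ᵥ v)) = star v ⬝ᵥ ((Aᴴ * B * A) *ᵥ v) := by
  rw [star_mulVec, ← dotProduct_mulVec, mulVec_mulVec, mulVec_mulVec, Matrix.mul_assoc]

lemma conjTranspose_tetraM_mul_pauli_mul_tetraM {a b : ℝ} (ha : a = 1 ∨ a = -1)
    (hb : b = 1 ∨ b = -1) (k : Fin 4) :
    (tetraM a b)ᴴ * pauli k * tetraM a b = ((![1, a, a * b, b] k : ℝ) : ℂ) • pauli k := by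
  have hne : (-1 : ℝ) ≠ 1 := by norm_num
  rcases ha with rfl | rfl <;> rcases hb with rfl | rfl <;>
    simp only [tetraM, if_true, hne, if_false] <;> fin_cases k <;> ext i j <;>
    fin_cases i <;> fin_cases j <;>
    simp [pauli, σX, σY, σZ, Matrix.mul_apply, Fin.sum_univ_two, Matrix.one_apply]

lemma star_dotProduct_pauli_mulVec_bloch (p q θ : ℝ) (k : Fin 4) :
    star ![(p : ℂ), exp (θ * I) * q] ⬝ᵥ (pauli k *ᵥ ![(p : ℂ), exp (θ * I) * q])
      = ((![p ^ 2 + q ^ 2, 2 * p * q * Real.cos θ, 2 * p * q * Real.sin θ, p ^ 2 - q ^ 2] k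
          : ℝ) : ℂ) := by
  have hcs : (Real.cos θ : ℂ) ^ 2 + (Real.sin θ : ℂ) ^ 2 = 1 := by
    exact_mod_cast Real.cos_sq_add_sin_sq θ
  rw [exp_mul_I, ← ofReal_cos, ← ofReal_sin]
  generalize Real.cos θ = c at *
  generalize Real.sin θ = s at *
  fin_cases k <;>
    simp only [pauli, σX, σY, σZ, dotProduct, mulVec, Fin.sum_univ_two, Pi.star_apply,
      RCLike.star_def, map_mul, map_add, conj_ofReal, conj_I, Fin.isValue, cons_val', of_apply,
      cons_val_zero, cons_val_one, cons_val_fin_one, one_apply_eq, one_apply_ne zero_ne_one,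
      one_apply_ne one_ne_zero, Fin.reduceFinMk, cons_val, Fin.zero_eta, Fin.mk_one, ofReal_add,
      ofReal_sub, ofReal_mul, ofReal_pow, ofReal_ofNat]
  · linear_combination (q : ℂ) ^ 2 * hcs - (s * q : ℂ) ^ 2 * I_sq
  · ring
  · linear_combination -2 * (p * q * s : ℂ) * I_sq
  · linear_combination -(q : ℂ) ^ 2 * hcs + (s * q : ℂ) ^ 2 * I_sq

lemma ψpp_eq_bloch : ψpp = ![((√(3 + √3) / √6 : ℝ) : ℂ),
    exp ((Real.pi / 4 : ℝ) * I) * ((√(3 - √3) / √6 : ℝ) : ℂ)] := by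
  ext i
  fin_cases i
  · simp [ψpp]
  · simp only [ψpp]; push_cast; ring_nf

lemma two_mul_ψpp_amplitudes_mul_cos_pi_div_four :
    2 * (√(3 + √3) / √6) * (√(3 - √3) / √6) * (√2 / 2) = (√3)⁻¹ := by
  have h3 : √3 ^ 2 = 3 := Real.sq_sqrt (by norm_num)
  have hpq : √(3 + √3) * √(3 - √3) = √6 := by
    rw [← Real.sqrt_mul (by positivity)]
    congr 1
    linear_combination -h3
  have h6 : √6 = √2 * √3 := by rw [← Real.sqrt_mul (by norm_num)]; norm_num
  have h2 : √2 ≠ 0 := by positivity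
  have h3' : √3 ≠ 0 := by positivity
  calc _ = (√(3 + √3) * √(3 - √3)) * √2 / (√6 * √6) := by ring
    _ = _ := by rw [hpq, h6]; field_simp

lemma star_dotProduct_pauli_mulVec_ψpp (k : Fin 4) :
    star ψpp ⬝ᵥ (pauli k *ᵥ ψpp) = ((if k = 0 then 1 else (√3)⁻¹ : ℝ) : ℂ) := by
  have h3 : √3 ^ 2 = 3 := Real.sq_sqrt (by norm_num)
  have hp : (√(3 + √3) / √6) ^ 2 = (3 + √3) / 6 := by
    rw [div_pow, Real.sq_sqrt (by positivity), Real.sq_sqrt (by norm_num)]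
  have hq : (√(3 - √3) / √6) ^ 2 = (3 - √3) / 6 := by
    have h3le : √3 ≤ 3 := by nlinarith [Real.sqrt_nonneg 3]
    rw [div_pow, Real.sq_sqrt (by linarith), Real.sq_sqrt (by norm_num)]
  have h3inv : (√3)⁻¹ = √3 / 3 := by field_simp; linear_combination -h3
  rw [ψpp_eq_bloch, star_dotProduct_pauli_mulVec_bloch]
  congr 1
  fin_cases k <;>
    simp only [hp, hq, Real.cos_pi_div_four, Real.sin_pi_div_four, h3inv,
      two_mul_ψpp_amplitudes_mul_cos_pi_div_four, Fin.isValue, cons_val_zero, cons_val_one,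
      Fin.reduceFinMk, cons_val, Fin.zero_eta, Fin.mk_one, Fin.reduceEq, one_ne_zero, if_true,
      if_false] <;>
    ring

lemma star_dotProduct_pauli_mulVec_tetra {a b : ℝ} (ha : a = 1 ∨ a = -1) (hb : b = 1 ∨ b = -1)
    (k : Fin 4) :
    star (tetra a b) ⬝ᵥ (pauli k *ᵥ tetra a b)
      = ((![1, a, a * b, b] k * if k = 0 then 1 else (√3)⁻¹ : ℝ) : ℂ) := by
  rw [tetra, star_mulVec_dotProduct_mulVec_mulVec, conjTranspose_tetraM_mul_pauli_mul_tetraM ha hb,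
    smul_mulVec, dotProduct_smul, star_dotProduct_pauli_mulVec_ψpp, smul_eq_mul, ofReal_mul]

lemma prod_ite_eq_pow_weight {M : Type*} [CommMonoid M] {n : ℕ} (s : Fin n → Fin 4)
    (c : M) : ∏ i, (if s i = 0 then 1 else c) = c ^ weight s := by
  simp [weight, Finset.prod_ite]

theorem stmt_14 (n : ℕ) (Hhat : (Fin n → Fin 4) → ℝ)
    (x : Fin n → Fin 2 → ℝ) (hx : ∀ i b, x i b = 1 ∨ x i b = -1) :
    expValN (hamOf Hhat) (prodState (fun i => tetra (x i 0) (x i 1)))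
      = ((∑ s : Fin n → Fin 4, Hhat s * ((Real.sqrt 3)⁻¹) ^ weight s *
          ∏ i, ![(1 : ℝ), x i 0, x i 0 * x i 1, x i 1] (s i) : ℝ) : ℂ) := by
  rw [expValN_hamOf, ofReal_sum]
  refine Finset.sum_congr rfl fun s _ => ?_
  simp only [expValN_pauliString_prodState, star_dotProduct_pauli_mulVec_tetra (hx _ 0) (hx _ 1),
    ← ofReal_prod, Finset.prod_mul_distrib, prod_ite_eq_pow_weight, ← ofReal_mul]
  congr 1
  ring
end
end
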